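/- arXiv:1104.3237 — 5 statements merged into one kernel-verified Lean document; each statement's English description precedes it below -/
import Mathlib

section
/- Let (ν_n) be a sequence of strictly aperiodic probability measures on ℤ such that E(ν_n) = 0 for all n, such that φ(n) = ∑_{i=1}^n m₂(ν_i) = O(n), and such that there exist a constant C > 0 and an integer N₀ > 0 with |ν̂_n(t)| ≤ e^{−Ct²} for all n > N₀ and all t ∈ [−1/2, 1/2). Then for μ_n = ν_1∗⋯∗ν_n one has sup_n ∫_{−1/2}^{1/2} |μ̂_n''(t)| · |t| dt < ∞, where μ̂_n'' denotes the second derivative of the Fourier transform of μ_n. -/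
open scoped BigOperators
open Filter MeasureTheory

/-- A probability measure on `ℤ`, given as a nonnegative function summing to `1`. -/
def IsProbMeasure (ν : ℤ → ℝ) : Prop := (∀ k, 0 ≤ ν k) ∧ HasSum ν 1

/-- The Fourier transform `ν̂(t) = ∑_{k ∈ ℤ} ν(k) e^{2πikt}`. -/
noncomputable def ft (ν : ℤ → ℝ) (t : ℝ) : ℂ :=
  ∑' k : ℤ, (ν k : ℂ) * Complex.exp (2 * Real.pi * Complex.I * (k : ℂ) * (t : ℂ))

/-- Convolution of two measures on `ℤ`. -/
noncomputable def conv (μ ν : ℤ → ℝ) (k : ℤ) : ℝ := ∑' j : ℤ, μ (k - j) * ν j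

/-- `muN ν n = ν 0 ∗ ν 1 ∗ ⋯ ∗ ν n`. -/
noncomputable def muN (ν : ℕ → ℤ → ℝ) : ℕ → ℤ → ℝ
  | 0 => ν 0
  | n + 1 => conv (muN ν n) (ν (n + 1))

/-- The expectation `E(ν) = ∑ k ν(k)`. -/
noncomputable def expectation (ν : ℤ → ℝ) : ℝ := ∑' k : ℤ, (k : ℝ) * ν k

/-- The second moment `m₂(ν)`. -/
noncomputable def m2 (ν : ℤ → ℝ) : ℝ := ∑' k : ℤ, |(k : ℝ)| ^ 2 * ν k

/-- The first moment `m₁(ν)`. -/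
noncomputable def m1 (ν : ℤ → ℝ) : ℝ := ∑' k : ℤ, |(k : ℝ)| * ν k

/-- `ν` is strictly aperiodic: its support is not contained in any proper coset `r + βℤ`. -/
def StrictlyAperiodic (ν : ℤ → ℝ) : Prop :=
  ∀ β r : ℤ, β.natAbs ≠ 1 → ∃ k : ℤ, ν k ≠ 0 ∧ ¬ β ∣ (k - r)

/-- The mass `ν(βℤ + r)` that `ν` gives to the coset `βℤ + r`. -/
noncomputable def cosetMass (ν : ℤ → ℝ) (β r : ℤ) : ℝ :=
  ∑' k : ℤ, if β ∣ (k - r) then ν k else 0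


noncomputable def c2 (k : ℤ) : ℂ := 2 * Real.pi * Complex.I * k
noncomputable def e2 (k : ℤ) (t : ℝ) : ℂ := Complex.exp (c2 k * t)

lemma ft_eq (ν : ℤ → ℝ) (t : ℝ) : ft ν t = ∑' k : ℤ, (ν k : ℂ) * e2 k t := rfl

lemma e2_eq (k : ℤ) (t : ℝ) :
    e2 k t = Complex.exp (((2 * Real.pi * k * t : ℝ) : ℂ) * Complex.I) := by
  unfold e2 c2; congr 1; push_cast; ring

lemma norm_e2 (k : ℤ) (t : ℝ) : ‖e2 k t‖ = 1 := by
  rw [e2_eq, Complex.norm_exp_ofReal_mul_I]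

lemma e2_add (a b : ℤ) (t : ℝ) : e2 (a + b) t = e2 a t * e2 b t := by
  unfold e2; rw [← Complex.exp_add]; congr 1; unfold c2; push_cast; ring

lemma norm_c2 (k : ℤ) : ‖c2 k‖ = 2 * Real.pi * |(k : ℝ)| := by
  unfold c2
  rw [norm_mul, norm_mul, norm_mul]
  simp [Complex.norm_real, Real.pi_nonneg, abs_of_nonneg, Complex.norm_intCast]

lemma hasDerivAt_e2 (k : ℤ) (t : ℝ) :
    HasDerivAt (fun s : ℝ => e2 k s) (c2 k * e2 k t) t := by
  have h1 : HasDerivAt (fun s : ℝ => c2 k * (s : ℂ)) (c2 k) t := by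
    simpa using ((hasDerivAt_id (t : ℂ)).const_mul (c2 k)).comp_ofReal
  simpa [e2, mul_comm] using h1.cexp

lemma continuous_e2 (k : ℤ) : Continuous (fun t : ℝ => e2 k t) := by
  unfold e2; fun_prop

lemma norm_exp_mul_I_sub_one_le (θ : ℝ) :
    ‖Complex.exp ((θ : ℂ) * Complex.I) - 1‖ ≤ |θ| := by
  have h : ‖Complex.exp ((θ : ℂ) * Complex.I) - 1‖ ^ 2 = 2 - 2 * Real.cos θ := by
    rw [Complex.exp_mul_I, ← Complex.ofReal_cos, ← Complex.ofReal_sin]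
    rw [Complex.sq_norm]
    simp [Complex.normSq_apply, Complex.cos_ofReal_re, Complex.sin_ofReal_re]
    nlinarith [Real.sin_sq_add_cos_sq θ]
  have h2 := Real.one_sub_sq_div_two_le_cos (x := θ)
  nlinarith [norm_nonneg (Complex.exp ((θ : ℂ) * Complex.I) - 1), abs_nonneg θ, sq_abs θ]

lemma norm_e2_sub_one_le (k : ℤ) (t : ℝ) :
    ‖e2 k t - 1‖ ≤ 2 * Real.pi * |(k : ℝ)| * |t| := by
  rw [e2_eq]
  calc ‖Complex.exp (((2 * Real.pi * k * t : ℝ) : ℂ) * Complex.I) - 1‖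
      ≤ |2 * Real.pi * k * t| := norm_exp_mul_I_sub_one_le _
    _ = 2 * Real.pi * |(k : ℝ)| * |t| := by
        rw [abs_mul, abs_mul, abs_mul]
        rw [abs_of_nonneg (by norm_num : (0:ℝ) ≤ 2), abs_of_nonneg Real.pi_nonneg]

section Single
variable {ν : ℤ → ℝ} (h0 : ∀ k, 0 ≤ ν k) (hsum : Summable ν)
  (h2 : Summable fun k : ℤ => |(k : ℝ)| ^ 2 * ν k)

noncomputable def G1 (ν : ℤ → ℝ) (t : ℝ) : ℂ := ∑' k : ℤ, (ν k : ℂ) * (c2 k * e2 k t)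
noncomputable def G2 (ν : ℤ → ℝ) (t : ℝ) : ℂ := ∑' k : ℤ, (ν k : ℂ) * (c2 k ^ 2 * e2 k t)

include h0 hsum h2 in
lemma summable_m1' : Summable (fun k : ℤ => |(k : ℝ)| * ν k) := by
  refine Summable.of_nonneg_of_le (fun k => mul_nonneg (abs_nonneg _) (h0 k)) (fun k => ?_)
    (hsum.add h2)
  have : |(k : ℝ)| ≤ 1 + |(k : ℝ)| ^ 2 := by nlinarith [sq_nonneg (|(k : ℝ)| - 1), abs_nonneg ((k:ℝ))]
  calc |(k : ℝ)| * ν k ≤ (1 + |(k : ℝ)| ^ 2) * ν k := mul_le_mul_of_nonneg_right this (h0 k)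
    _ = ν k + |(k : ℝ)| ^ 2 * ν k := by ring

include h0 in
lemma norm_term0 (k : ℤ) (t : ℝ) : ‖(ν k : ℂ) * e2 k t‖ = ν k := by
  rw [norm_mul, norm_e2, Complex.norm_real, Real.norm_eq_abs, abs_of_nonneg (h0 k), mul_one]

include h0 in
lemma norm_term1 (k : ℤ) (t : ℝ) :
    ‖(ν k : ℂ) * (c2 k * e2 k t)‖ = 2 * Real.pi * (|(k : ℝ)| * ν k) := by
  rw [norm_mul, norm_mul, norm_e2, norm_c2, Complex.norm_real, Real.norm_eq_abs,
    abs_of_nonneg (h0 k)]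
  ring

include h0 in
lemma norm_term2 (k : ℤ) (t : ℝ) :
    ‖(ν k : ℂ) * (c2 k ^ 2 * e2 k t)‖ = 4 * Real.pi ^ 2 * (|(k : ℝ)| ^ 2 * ν k) := by
  rw [norm_mul, norm_mul, norm_e2, norm_pow, norm_c2, Complex.norm_real, Real.norm_eq_abs,
    abs_of_nonneg (h0 k)]
  ring

include h0 hsum h2 in
lemma hasDerivAt_ft (t : ℝ) : HasDerivAt (ft ν) (G1 ν t) t := by
  have key : HasDerivAt (fun s : ℝ => ∑' k : ℤ, (ν k : ℂ) * e2 k s) (G1 ν t) t := by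
    refine hasDerivAt_tsum (u := fun k : ℤ => 2 * Real.pi * (|(k : ℝ)| * ν k))
      (((summable_m1' h0 hsum h2).mul_left _)) (fun k s => (hasDerivAt_e2 k s).const_mul _)
      (fun k s => le_of_eq (norm_term1 h0 k s)) (y₀ := 0) ?_ t
    exact Summable.of_norm (by simpa only [norm_term0 h0] using hsum)
  have : ft ν = fun s : ℝ => ∑' k : ℤ, (ν k : ℂ) * e2 k s := rfl
  rw [this]; exact key

include h0 hsum h2 in
lemma hasDerivAt_G1 (t : ℝ) : HasDerivAt (G1 ν) (G2 ν t) t := by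
  have key : HasDerivAt (fun s : ℝ => ∑' k : ℤ, (ν k : ℂ) * (c2 k * e2 k s)) (G2 ν t) t := by
    refine hasDerivAt_tsum (u := fun k : ℤ => 4 * Real.pi ^ 2 * (|(k : ℝ)| ^ 2 * ν k))
      (h2.mul_left _) (fun k s => ?_)
      (fun k s => le_of_eq (norm_term2 h0 k s)) (y₀ := 0) ?_ t
    · have := ((hasDerivAt_e2 k s).const_mul (c2 k)).const_mul ((ν k : ℂ))
      exact this.congr_deriv (by ring)
    · exact Summable.of_norm (by
        simpa only [norm_term1 h0] using (summable_m1' h0 hsum h2).mul_left (2 * Real.pi))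
  have : G1 ν = fun s : ℝ => ∑' k : ℤ, (ν k : ℂ) * (c2 k * e2 k s) := rfl
  rw [this]; exact key

include h0 h2 in
lemma continuous_G2 : Continuous (G2 ν) := by
  have : G2 ν = fun s : ℝ => ∑' k : ℤ, (ν k : ℂ) * (c2 k ^ 2 * e2 k s) := rfl
  rw [this]
  refine continuous_tsum (fun k => ?_) (h2.mul_left (4 * Real.pi ^ 2))
    (fun k s => le_of_eq (norm_term2 h0 k s))
  exact continuous_const.mul (continuous_const.mul (continuous_e2 k))


include h0 in
lemma m2_nonneg : 0 ≤ m2 ν :=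
  tsum_nonneg fun k => mul_nonneg (by positivity) (h0 k)

include h0 in
lemma norm_ft_le_one (hsum1 : HasSum ν 1) (t : ℝ) : ‖ft ν t‖ ≤ 1 := by
  rw [ft_eq]
  calc ‖∑' k : ℤ, (ν k : ℂ) * e2 k t‖ ≤ ∑' k : ℤ, ‖(ν k : ℂ) * e2 k t‖ :=
        norm_tsum_le_tsum_norm (by simpa only [norm_term0 h0] using hsum1.summable)
    _ = ∑' k : ℤ, ν k := by simp only [norm_term0 h0]
    _ = 1 := hsum1.tsum_eq

include h0 h2 in
lemma norm_G2_le (t : ℝ) : ‖G2 ν t‖ ≤ 4 * Real.pi ^ 2 * m2 ν := by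
  have hs : Summable fun k : ℤ => ‖(ν k : ℂ) * (c2 k ^ 2 * e2 k t)‖ := by
    simpa only [norm_term2 h0] using h2.mul_left (4 * Real.pi ^ 2)
  calc ‖G2 ν t‖ ≤ ∑' k : ℤ, ‖(ν k : ℂ) * (c2 k ^ 2 * e2 k t)‖ := norm_tsum_le_tsum_norm hs
    _ = ∑' k : ℤ, 4 * Real.pi ^ 2 * (|(k : ℝ)| ^ 2 * ν k) := by simp only [norm_term2 h0]
    _ = 4 * Real.pi ^ 2 * m2 ν := tsum_mul_left

include h0 hsum h2 in
lemma norm_G1_le (hE : expectation ν = 0) (t : ℝ) :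
    ‖G1 ν t‖ ≤ 4 * Real.pi ^ 2 * m2 ν * |t| := by
  have hm1 := summable_m1' h0 hsum h2
  have hsA : Summable fun k : ℤ => (ν k : ℂ) * (c2 k * e2 k t) :=
    Summable.of_norm (by simpa only [norm_term1 h0] using hm1.mul_left (2 * Real.pi))
  have hsB : Summable fun k : ℤ => (ν k : ℂ) * c2 k := by
    refine Summable.of_norm ?_
    have : ∀ k : ℤ, ‖(ν k : ℂ) * c2 k‖ = 2 * Real.pi * (|(k : ℝ)| * ν k) := fun k => by
      rw [norm_mul, norm_c2, Complex.norm_real, Real.norm_eq_abs, abs_of_nonneg (h0 k)]; ring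
    simpa only [this] using hm1.mul_left (2 * Real.pi)
  have hBzero : ∑' k : ℤ, (ν k : ℂ) * c2 k = 0 := by
    have h1 : ∀ k : ℤ, (ν k : ℂ) * c2 k = 2 * Real.pi * Complex.I * (((k : ℝ) * ν k : ℝ) : ℂ) := by
      intro k; unfold c2; push_cast; ring
    rw [tsum_congr h1, tsum_mul_left, ← Complex.ofReal_tsum]
    have : ∑' k : ℤ, (k : ℝ) * ν k = 0 := hE
    rw [this, Complex.ofReal_zero, mul_zero]
  have key : G1 ν t = ∑' k : ℤ, (ν k : ℂ) * (c2 k * (e2 k t - 1)) := by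
    have : ∀ k : ℤ, (ν k : ℂ) * (c2 k * (e2 k t - 1)) =
        (ν k : ℂ) * (c2 k * e2 k t) - (ν k : ℂ) * c2 k := by intro k; ring
    rw [tsum_congr this, Summable.tsum_sub hsA hsB, hBzero, sub_zero]; rfl
  rw [key]
  have hbound : ∀ k : ℤ, ‖(ν k : ℂ) * (c2 k * (e2 k t - 1))‖ ≤
      4 * Real.pi ^ 2 * |t| * (|(k : ℝ)| ^ 2 * ν k) := by
    intro k
    rw [norm_mul, norm_mul, norm_c2, Complex.norm_real, Real.norm_eq_abs, abs_of_nonneg (h0 k)]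
    calc ν k * (2 * Real.pi * |(k : ℝ)| * ‖e2 k t - 1‖)
        ≤ ν k * (2 * Real.pi * |(k : ℝ)| * (2 * Real.pi * |(k : ℝ)| * |t|)) := by
          refine mul_le_mul_of_nonneg_left ?_ (h0 k)
          refine mul_le_mul_of_nonneg_left (norm_e2_sub_one_le k t) ?_
          positivity
      _ = 4 * Real.pi ^ 2 * |t| * (|(k : ℝ)| ^ 2 * ν k) := by ring
  calc ‖∑' k : ℤ, (ν k : ℂ) * (c2 k * (e2 k t - 1))‖
      ≤ ∑' k : ℤ, 4 * Real.pi ^ 2 * |t| * (|(k : ℝ)| ^ 2 * ν k) := by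
        have hsN : Summable fun k : ℤ => ‖(ν k : ℂ) * (c2 k * (e2 k t - 1))‖ :=
          Summable.of_nonneg_of_le (fun k => norm_nonneg _) hbound
            (h2.mul_left (4 * Real.pi ^ 2 * |t|))
        exact (norm_tsum_le_tsum_norm hsN).trans
          (Summable.tsum_le_tsum hbound hsN (h2.mul_left (4 * Real.pi ^ 2 * |t|)))
    _ = 4 * Real.pi ^ 2 * |t| * m2 ν := tsum_mul_left
    _ = 4 * Real.pi ^ 2 * m2 ν * |t| := by ring
end Single


section Conv
variable {μ ν : ℤ → ℝ} (hμ : IsProbMeasure μ) (hν : IsProbMeasure ν)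

def shearEquiv : ℤ × ℤ ≃ ℤ × ℤ where
  toFun p := (p.1 + p.2, p.2)
  invFun p := (p.1 - p.2, p.2)
  left_inv p := by simp
  right_inv p := by simp

include hμ hν in
lemma summable_P : Summable (fun p : ℤ × ℤ => μ (p.1 - p.2) * ν p.2) := by
  have hP : Summable (fun p : ℤ × ℤ => μ p.1 * ν p.2) :=
    hμ.2.summable.mul_of_nonneg hν.2.summable hμ.1 hν.1
  have : (fun p : ℤ × ℤ => μ (p.1 - p.2) * ν p.2) =
      (fun p : ℤ × ℤ => μ p.1 * ν p.2) ∘ (shearEquiv.symm) := rfl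
  rw [this]
  exact (Equiv.summable_iff shearEquiv.symm).mpr hP

include hμ hν in
lemma conv_isProbMeasure : IsProbMeasure (conv μ ν) := by
  have hP2 := summable_P hμ hν
  constructor
  · intro k
    exact tsum_nonneg fun j => mul_nonneg (hμ.1 _) (hν.1 _)
  · have hfib : ∀ k : ℤ, HasSum (fun j : ℤ => μ (k - j) * ν j) (conv μ ν k) :=
      fun k => (hP2.prod_factor k).hasSum
    have h1 : HasSum (fun p : ℤ × ℤ => μ (p.1 - p.2) * ν p.2) 1 := by
      have heq : ∑' p : ℤ × ℤ, μ (p.1 - p.2) * ν p.2 = ∑' p : ℤ × ℤ, μ p.1 * ν p.2 := by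
        have : ∀ p : ℤ × ℤ, μ (p.1 - p.2) * ν p.2 =
            (fun p : ℤ × ℤ => μ p.1 * ν p.2) (shearEquiv.symm p) := fun p => rfl
        rw [tsum_congr this]
        exact Equiv.tsum_eq shearEquiv.symm (fun p : ℤ × ℤ => μ p.1 * ν p.2)
      have h2 : ∑' p : ℤ × ℤ, μ p.1 * ν p.2 = 1 := by
        rw [← Summable.tsum_mul_tsum hμ.2.summable hν.2.summable
          (hμ.2.summable.mul_of_nonneg hν.2.summable hμ.1 hν.1), hμ.2.tsum_eq, hν.2.tsum_eq,
          one_mul]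
      exact (hP2.hasSum_iff).mpr (heq.trans h2)
    exact h1.prod_fiberwise hfib

include hμ hν in
lemma ft_conv (t : ℝ) : ft (conv μ ν) t = ft μ t * ft ν t := by
  have hfg : Summable (fun p : ℤ × ℤ =>
      ((μ p.1 : ℂ) * e2 p.1 t) * ((ν p.2 : ℂ) * e2 p.2 t)) := by
    refine Summable.of_norm ?_
    have : ∀ p : ℤ × ℤ, ‖((μ p.1 : ℂ) * e2 p.1 t) * ((ν p.2 : ℂ) * e2 p.2 t)‖ =
        μ p.1 * ν p.2 := by
      intro p
      rw [norm_mul, norm_term0 hμ.1, norm_term0 hν.1]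
    simpa only [this] using hμ.2.summable.mul_of_nonneg hν.2.summable hμ.1 hν.1
  have hsf : Summable fun k : ℤ => (μ k : ℂ) * e2 k t :=
    Summable.of_norm (by simpa only [norm_term0 hμ.1] using hμ.2.summable)
  have hsg : Summable fun k : ℤ => (ν k : ℂ) * e2 k t :=
    Summable.of_norm (by simpa only [norm_term0 hν.1] using hν.2.summable)
  rw [ft_eq, ft_eq, ft_eq, Summable.tsum_mul_tsum hsf hsg hfg]
  -- now reindex
  have step1 : ∑' p : ℤ × ℤ, ((μ p.1 : ℂ) * e2 p.1 t) * ((ν p.2 : ℂ) * e2 p.2 t)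
      = ∑' p : ℤ × ℤ, ((μ (p.1 - p.2) * ν p.2 : ℝ) : ℂ) * e2 p.1 t := by
    rw [← Equiv.tsum_eq shearEquiv.symm]
    refine tsum_congr fun p => ?_
    show ((μ (p.1 - p.2) : ℂ) * e2 (p.1 - p.2) t) * ((ν p.2 : ℂ) * e2 p.2 t) = _
    have : e2 (p.1 - p.2) t * e2 p.2 t = e2 p.1 t := by
      rw [← e2_add, sub_add_cancel]
    push_cast
    rw [← this]; ring
  rw [step1]
  have hsP2 : Summable (fun p : ℤ × ℤ => ((μ (p.1 - p.2) * ν p.2 : ℝ) : ℂ) * e2 p.1 t) := by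
    refine Summable.of_norm ?_
    have : ∀ p : ℤ × ℤ, ‖((μ (p.1 - p.2) * ν p.2 : ℝ) : ℂ) * e2 p.1 t‖ =
        μ (p.1 - p.2) * ν p.2 := by
      intro p
      rw [norm_mul, norm_e2, mul_one, Complex.norm_real, Real.norm_eq_abs,
        abs_of_nonneg (mul_nonneg (hμ.1 _) (hν.1 _))]
    simpa only [this] using summable_P hμ hν
  rw [Summable.tsum_prod' hsP2 (fun k => hsP2.prod_factor k)]
  refine tsum_congr fun k => Eq.symm ?_
  show ∑' j : ℤ, ((μ (k - j) * ν j : ℝ) : ℂ) * e2 k t = _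
  calc ∑' j : ℤ, ((μ (k - j) * ν j : ℝ) : ℂ) * e2 k t
      = (∑' j : ℤ, ((μ (k - j) * ν j : ℝ) : ℂ)) * e2 k t := tsum_mul_right
    _ = ((conv μ ν k : ℝ) : ℂ) * e2 k t := by rw [← Complex.ofReal_tsum]; rfl

end Conv

section Integrals

lemma even_integral_half (g : ℝ → ℝ) (hgc : Continuous g) (hg : ∀ t, g (-t) = g t) :
    ∫ t in (-(1:ℝ)/2)..(1/2), g t = 2 * ∫ t in (0:ℝ)..(1/2), g t := by
  have h1 : ∫ t in (-(1:ℝ)/2)..(0:ℝ), g t = ∫ t in (0:ℝ)..(1/2), g t := by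
    have h := intervalIntegral.integral_comp_neg (a := (0:ℝ)) (b := 1/2) g
    simp only [hg, neg_zero] at h
    rw [show (-(1:ℝ)/2) = -(1/2 : ℝ) by norm_num]
    exact h.symm
  have h2 : (∫ t in (-(1:ℝ)/2)..(0:ℝ), g t) + ∫ t in (0:ℝ)..(1/2), g t
      = ∫ t in (-(1:ℝ)/2)..(1/2), g t :=
    intervalIntegral.integral_add_adjacent_intervals (hgc.intervalIntegrable _ _) (hgc.intervalIntegrable _ _)
  linarith [h1, h2]

lemma integral_abs_half : ∫ t in (-(1:ℝ)/2)..(1/2), |t| = (1:ℝ)/4 := by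
  rw [even_integral_half _ continuous_abs (fun t => abs_neg t)]
  have : ∫ t in (0:ℝ)..(1/2), |t| = ∫ t in (0:ℝ)..(1/2), t := by
    refine intervalIntegral.integral_congr fun t ht => ?_
    rw [Set.uIcc_of_le (by norm_num : (0:ℝ) ≤ 1/2)] at ht
    exact abs_of_nonneg ht.1
  rw [this, integral_id]
  norm_num

lemma hasDerivAt_gauss (b : ℝ) (hb : b ≠ 0) (t : ℝ) :
    HasDerivAt (fun s : ℝ => -(Real.exp (-(b * s ^ 2)) / (2 * b)))
      (t * Real.exp (-(b * t ^ 2))) t := by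
  have h1 : HasDerivAt (fun s : ℝ => -(b * s ^ 2)) (-(b * (2 * t))) t := by
    have := ((hasDerivAt_pow 2 t).const_mul b).neg
    exact this.congr_deriv (by simp)
  have h2 := (h1.exp.div_const (2 * b)).neg
  exact h2.congr_deriv (by field_simp)

lemma integral_abs_exp_le (b : ℝ) (hb : 0 < b) :
    ∫ t in (-(1:ℝ)/2)..(1/2), |t| * Real.exp (-(b * t ^ 2)) ≤ 1 / b := by
  have hcont : Continuous fun t : ℝ => |t| * Real.exp (-(b * t ^ 2)) := by fun_prop
  rw [even_integral_half _ hcont (fun t => by rw [abs_neg, neg_sq])]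
  have hcongr : ∫ t in (0:ℝ)..(1/2), |t| * Real.exp (-(b * t ^ 2))
      = ∫ t in (0:ℝ)..(1/2), t * Real.exp (-(b * t ^ 2)) := by
    refine intervalIntegral.integral_congr fun t ht => ?_
    rw [Set.uIcc_of_le (by norm_num : (0:ℝ) ≤ 1/2)] at ht
    rw [abs_of_nonneg ht.1]
  rw [hcongr]
  have hval : ∫ t in (0:ℝ)..(1/2), t * Real.exp (-(b * t ^ 2))
      = -(Real.exp (-(b * (1/2 : ℝ) ^ 2)) / (2 * b)) - -(Real.exp (-(b * (0:ℝ) ^ 2)) / (2 * b)) := by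
    refine intervalIntegral.integral_eq_sub_of_hasDerivAt (fun t _ => hasDerivAt_gauss b (ne_of_gt hb) t) ?_
    exact (by fun_prop : Continuous fun t : ℝ => t * Real.exp (-(b * t ^ 2))).intervalIntegrable _ _
  rw [hval]
  have h1 : Real.exp (-(b * (0:ℝ) ^ 2)) = 1 := by norm_num
  have h2 : 0 < Real.exp (-(b * (1/2 : ℝ) ^ 2)) := Real.exp_pos _
  rw [h1]
  rw [div_eq_mul_inv 1 b]
  have hbinv : 0 < (2 * b) := by linarith
  calc 2 * (-(Real.exp (-(b * (1/2:ℝ) ^ 2)) / (2 * b)) - -(1 / (2 * b)))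
      ≤ 2 * (1 / (2 * b)) := by
        have : 0 < Real.exp (-(b * (1/2:ℝ) ^ 2)) / (2 * b) := by positivity
        linarith
    _ = 1 * b⁻¹ := by field_simp
end Integrals


section Helpers

lemma exp_decay_mono (C t : ℝ) (hC : 0 ≤ C) {x y : ℕ} (h : x ≤ y) :
    Real.exp (-C * t ^ 2 * (y : ℝ)) ≤ Real.exp (-C * t ^ 2 * (x : ℝ)) := by
  apply Real.exp_le_exp.mpr
  have h1 : 0 ≤ C * t ^ 2 := by positivity
  have h2 : (x : ℝ) ≤ (y : ℝ) := Nat.cast_le.mpr h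
  nlinarith

lemma exp_decay_mul (C t : ℝ) (x y : ℕ) :
    Real.exp (-C * t ^ 2 * (x : ℝ)) * Real.exp (-C * t ^ 2 * (y : ℝ))
      = Real.exp (-C * t ^ 2 * ((x + y : ℕ) : ℝ)) := by
  rw [← Real.exp_add]
  congr 1
  push_cast
  ring

lemma ft_add_one (ν : ℤ → ℝ) (t : ℝ) : ft ν (t + 1) = ft ν t := by
  rw [ft_eq, ft_eq]
  refine tsum_congr fun k => ?_
  congr 1
  unfold e2
  have : c2 k * ((t : ℝ) + 1 : ℝ) = c2 k * (t : ℝ) + (k : ℂ) * (2 * (Real.pi : ℂ) * Complex.I) := by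
    unfold c2; push_cast; ring
  rw [this, Complex.exp_add, Complex.exp_int_mul_two_pi_mul_I, mul_one]

lemma x_exp_le (x : ℝ) : x * Real.exp (-x) ≤ 1 := by
  have h := Real.add_one_le_exp x
  have h2 : 0 < Real.exp (-x) := Real.exp_pos _
  have h3 : Real.exp x * Real.exp (-x) = 1 := by rw [← Real.exp_add]; simp
  nlinarith

lemma key_ptwise (p S b t : ℝ) (hp : 0 ≤ p) (hS : 0 ≤ S) (hb : 0 < b) :
    (4 * p ^ 2 * S + 16 * p ^ 4 * S ^ 2 * t ^ 2) * Real.exp (-(b * t ^ 2))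
      ≤ (4 * p ^ 2 * S + 32 * p ^ 4 * S ^ 2 / b) * Real.exp (-(b / 2 * t ^ 2)) := by
  have hy : 0 ≤ b / 2 * t ^ 2 := by positivity
  have hsplit : Real.exp (-(b * t ^ 2))
      = Real.exp (-(b / 2 * t ^ 2)) * Real.exp (-(b / 2 * t ^ 2)) := by
    rw [← Real.exp_add]; congr 1; ring
  have h2 : t ^ 2 * Real.exp (-(b / 2 * t ^ 2)) ≤ 2 / b := by
    have := x_exp_le (b / 2 * t ^ 2)
    have hb2 : 0 < b / 2 := by linarith
    calc t ^ 2 * Real.exp (-(b / 2 * t ^ 2))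
        = (2 / b) * (b / 2 * t ^ 2 * Real.exp (-(b / 2 * t ^ 2))) := by field_simp
      _ ≤ (2 / b) * 1 := by
          refine mul_le_mul_of_nonneg_left ?_ (by positivity)
          exact this
      _ = 2 / b := mul_one _
  have hE1 : Real.exp (-(b * t ^ 2)) ≤ Real.exp (-(b / 2 * t ^ 2)) := by
    apply Real.exp_le_exp.mpr; nlinarith
  have hEpos : 0 ≤ Real.exp (-(b / 2 * t ^ 2)) := (Real.exp_pos _).le
  have hEpos2 : 0 ≤ Real.exp (-(b * t ^ 2)) := (Real.exp_pos _).le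
  have term1 : 4 * p ^ 2 * S * Real.exp (-(b * t ^ 2))
      ≤ 4 * p ^ 2 * S * Real.exp (-(b / 2 * t ^ 2)) :=
    mul_le_mul_of_nonneg_left hE1 (by positivity)
  have term2 : 16 * p ^ 4 * S ^ 2 * t ^ 2 * Real.exp (-(b * t ^ 2))
      ≤ 32 * p ^ 4 * S ^ 2 / b * Real.exp (-(b / 2 * t ^ 2)) := by
    rw [hsplit]
    calc 16 * p ^ 4 * S ^ 2 * t ^ 2 * (Real.exp (-(b / 2 * t ^ 2)) * Real.exp (-(b / 2 * t ^ 2)))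
        = 16 * p ^ 4 * S ^ 2 * (t ^ 2 * Real.exp (-(b / 2 * t ^ 2))) * Real.exp (-(b / 2 * t ^ 2)) := by
          ring
      _ ≤ 16 * p ^ 4 * S ^ 2 * (2 / b) * Real.exp (-(b / 2 * t ^ 2)) := by
          refine mul_le_mul_of_nonneg_right ?_ hEpos
          exact mul_le_mul_of_nonneg_left h2 (by positivity)
      _ = 32 * p ^ 4 * S ^ 2 / b * Real.exp (-(b / 2 * t ^ 2)) := by ring_nf
  nlinarith [term1, term2]

end Helpers

set_option maxHeartbeats 2000000 in
/-- Theorem 2.1.3: under the stated hypotheses on the sequence `ν`,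
the integrals `∫ |μ̂_n''(t)| |t| dt` are uniformly bounded in `n`,
where `μ_n = ν_0 ∗ ⋯ ∗ ν_n`. -/
theorem sup_integral_second_deriv_lt_top
    (ν : ℕ → ℤ → ℝ)
    (hprob : ∀ n, IsProbMeasure (ν n))
    (hap : ∀ n, StrictlyAperiodic (ν n))
    (hE : ∀ n, expectation (ν n) = 0)
    (hm2 : ∀ n, Summable fun k : ℤ => |(k : ℝ)| ^ 2 * ν n k)
    (hφ : ∃ K : ℝ, ∀ n : ℕ, ∑ i ∈ Finset.range (n + 1), m2 (ν i) ≤ K * (n + 1))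
    (C : ℝ) (hC : 0 < C) (N₀ : ℕ)
    (hft : ∀ n > N₀, ∀ t ∈ Set.Ico (-(1 : ℝ) / 2) (1 / 2),
      ‖ft (ν n) t‖ ≤ Real.exp (-C * t ^ 2)) :
    ∃ B : ℝ, ∀ n : ℕ,
      (∫ t in (-(1 : ℝ) / 2)..(1 / 2), ‖iteratedDeriv 2 (ft (muN ν n)) t‖ * |t|) ≤ B := by
  classical
  obtain ⟨K, hK⟩ := hφ
  set S : ℕ → ℝ := fun n => ∑ i ∈ Finset.range (n + 1), m2 (ν i) with hSdef
  have hm2nn : ∀ i, 0 ≤ m2 (ν i) := fun i => m2_nonneg (hprob i).1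
  have hS0 : ∀ n, 0 ≤ S n := fun n => Finset.sum_nonneg fun i _ => hm2nn i
  have hSsucc : ∀ n, S (n + 1) = S n + m2 (ν (n + 1)) := fun n => Finset.sum_range_succ _ _
  have hK0 : 0 ≤ K := by have := (hS0 0).trans (hK 0); nlinarith
  have hSK : ∀ n : ℕ, S n ≤ K * (n + 1) := hK
  have hprobN : ∀ n, IsProbMeasure (muN ν n) := by
    intro n
    induction n with
    | zero => exact hprob 0
    | succ n ih => exact conv_isProbMeasure ih (hprob (n + 1))
  -- extend the Fourier decay bound to the closed interval
  have hft' : ∀ n > N₀, ∀ t ∈ Set.Icc (-(1 : ℝ) / 2) (1 / 2),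
      ‖ft (ν n) t‖ ≤ Real.exp (-C * t ^ 2) := by
    intro n hn t ht
    rcases lt_or_eq_of_le ht.2 with h | h
    · exact hft n hn t ⟨ht.1, h⟩
    · have h1 : ft (ν n) t = ft (ν n) (-(1 : ℝ) / 2) := by
        rw [← ft_add_one (ν n) (-(1 : ℝ) / 2)]
        congr 1
        rw [h]; norm_num
      rw [h1]
      have h2 := hft n hn (-(1 : ℝ) / 2) ⟨le_refl _, by norm_num⟩
      calc ‖ft (ν n) (-(1 : ℝ) / 2)‖ ≤ Real.exp (-C * (-(1 : ℝ) / 2) ^ 2) := h2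
        _ = Real.exp (-C * t ^ 2) := by rw [h]; norm_num
  -- the key inductive invariant
  have inv : ∀ n : ℕ, ∃ f₁ f₂ : ℝ → ℂ,
      (∀ t, HasDerivAt (ft (muN ν n)) (f₁ t) t) ∧
      (∀ t, HasDerivAt f₁ (f₂ t) t) ∧ Continuous f₂ ∧
      (∀ t ∈ Set.Icc (-(1 : ℝ) / 2) (1 / 2),
        ‖ft (muN ν n) t‖ ≤ Real.exp (-C * t ^ 2 * ((n - N₀ : ℕ) : ℝ)) ∧
        ‖f₁ t‖ ≤ 4 * Real.pi ^ 2 * S n * |t| * Real.exp (-C * t ^ 2 * ((n - N₀ - 1 : ℕ) : ℝ)) ∧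
        ‖f₂ t‖ ≤ (4 * Real.pi ^ 2 * S n + 16 * Real.pi ^ 4 * S n ^ 2 * t ^ 2)
          * Real.exp (-C * t ^ 2 * ((n - N₀ - 2 : ℕ) : ℝ))) := by
    intro n
    induction n with
    | zero =>
      have hp := hprob 0
      refine ⟨G1 (ν 0), G2 (ν 0),
        fun t => hasDerivAt_ft hp.1 hp.2.summable (hm2 0) t,
        fun t => hasDerivAt_G1 hp.1 hp.2.summable (hm2 0) t,
        continuous_G2 hp.1 (hm2 0), fun t ht => ?_⟩
      have hz : ∀ j : ℕ, ((0 - N₀ - j : ℕ) : ℝ) = 0 := by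
        intro j; norm_cast; omega
      have hz0 : ((0 - N₀ : ℕ) : ℝ) = 0 := by norm_cast; omega
      have hS00 : S 0 = m2 (ν 0) := Finset.sum_range_one (f := fun i => m2 (ν i))
      refine ⟨?_, ?_, ?_⟩
      · rw [hz0, mul_zero, Real.exp_zero]
        exact norm_ft_le_one hp.1 hp.2 t
      · rw [hz 1, mul_zero, Real.exp_zero, mul_one, hS00]
        exact norm_G1_le hp.1 hp.2.summable (hm2 0) (hE 0) t
      · rw [hz 2, mul_zero, Real.exp_zero, mul_one, hS00]
        have h1 := norm_G2_le hp.1 (hm2 0) t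
        have h2 : 0 ≤ 16 * Real.pi ^ 4 * m2 (ν 0) ^ 2 * t ^ 2 := by positivity
        linarith
    | succ n ih =>
      obtain ⟨f₁, f₂, hd1, hd2, hc2, hbd⟩ := ih
      have hp := hprob (n + 1)
      have hgd : ∀ t, HasDerivAt (ft (ν (n + 1))) (G1 (ν (n + 1)) t) t :=
        fun t => hasDerivAt_ft hp.1 hp.2.summable (hm2 (n + 1)) t
      have hg1d : ∀ t, HasDerivAt (G1 (ν (n + 1))) (G2 (ν (n + 1)) t) t :=
        fun t => hasDerivAt_G1 hp.1 hp.2.summable (hm2 (n + 1)) t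
      have hfteq : ft (muN ν (n + 1)) = fun t => ft (muN ν n) t * ft (ν (n + 1)) t :=
        funext fun t => ft_conv (hprobN n) hp t
      have hfc : Continuous (ft (muN ν n)) :=
        Differentiable.continuous (fun t => (hd1 t).differentiableAt)
      have hf1c : Continuous f₁ :=
        Differentiable.continuous (fun t => (hd2 t).differentiableAt)
      have hgc : Continuous (ft (ν (n + 1))) :=
        Differentiable.continuous (fun t => (hgd t).differentiableAt)
      have hg1c : Continuous (G1 (ν (n + 1))) :=
        Differentiable.continuous (fun t => (hg1d t).differentiableAt)
      refine ⟨fun t => f₁ t * ft (ν (n + 1)) t + ft (muN ν n) t * G1 (ν (n + 1)) t,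
        fun t => (f₂ t * ft (ν (n + 1)) t + f₁ t * G1 (ν (n + 1)) t)
          + (f₁ t * G1 (ν (n + 1)) t + ft (muN ν n) t * G2 (ν (n + 1)) t),
        ?_, ?_, ?_, ?_⟩
      · intro t; rw [hfteq]; exact (hd1 t).mul (hgd t)
      · intro t; exact ((hd2 t).mul (hgd t)).add ((hd1 t).mul (hg1d t))
      · exact ((hc2.mul hgc).add (hf1c.mul hg1c)).add
          ((hf1c.mul hg1c).add (hfc.mul (continuous_G2 hp.1 (hm2 (n + 1)))))
      · intro t ht
        obtain ⟨hb0, hb1, hb2⟩ := hbd t ht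
        set m : ℝ := m2 (ν (n + 1)) with hmdef
        have hm0 : 0 ≤ m := hm2nn (n + 1)
        set β : ℕ := (n + 1 - N₀) - (n - N₀) with hβdef
        have hgb : ‖ft (ν (n + 1)) t‖ ≤ Real.exp (-C * t ^ 2 * (β : ℝ)) := by
          by_cases hn : N₀ < n + 1
          · have hβ1 : β = 1 := by omega
            rw [hβ1]
            simpa using hft' (n + 1) hn t ht
          · have hβ0 : β = 0 := by omega
            rw [hβ0]
            simp only [Nat.cast_zero, mul_zero, Real.exp_zero]
            exact norm_ft_le_one hp.1 hp.2 t
        have hg1b : ‖G1 (ν (n + 1)) t‖ ≤ 4 * Real.pi ^ 2 * m * |t| :=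
          norm_G1_le hp.1 hp.2.summable (hm2 (n + 1)) (hE (n + 1)) t
        have hg2b : ‖G2 (ν (n + 1)) t‖ ≤ 4 * Real.pi ^ 2 * m :=
          norm_G2_le hp.1 (hm2 (n + 1)) t
        have hCt : 0 ≤ C := le_of_lt hC
        -- exponential bookkeeping
        have hE0 : Real.exp (-C * t ^ 2 * ((n - N₀ : ℕ) : ℝ)) * Real.exp (-C * t ^ 2 * (β : ℝ))
            = Real.exp (-C * t ^ 2 * ((n + 1 - N₀ : ℕ) : ℝ)) := by
          rw [exp_decay_mul, show n - N₀ + β = n + 1 - N₀ from by omega]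
        have hE1 : Real.exp (-C * t ^ 2 * ((n - N₀ - 1 : ℕ) : ℝ)) * Real.exp (-C * t ^ 2 * (β : ℝ))
            ≤ Real.exp (-C * t ^ 2 * ((n + 1 - N₀ - 1 : ℕ) : ℝ)) := by
          rw [exp_decay_mul]
          exact exp_decay_mono C t hCt (by omega)
        have hE0' : Real.exp (-C * t ^ 2 * ((n - N₀ : ℕ) : ℝ))
            ≤ Real.exp (-C * t ^ 2 * ((n + 1 - N₀ - 1 : ℕ) : ℝ)) :=
          exp_decay_mono C t hCt (by omega)
        have hE2 : Real.exp (-C * t ^ 2 * ((n - N₀ - 2 : ℕ) : ℝ)) * Real.exp (-C * t ^ 2 * (β : ℝ))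
            ≤ Real.exp (-C * t ^ 2 * ((n + 1 - N₀ - 2 : ℕ) : ℝ)) := by
          rw [exp_decay_mul]
          exact exp_decay_mono C t hCt (by omega)
        have hE1' : Real.exp (-C * t ^ 2 * ((n - N₀ - 1 : ℕ) : ℝ))
            ≤ Real.exp (-C * t ^ 2 * ((n + 1 - N₀ - 2 : ℕ) : ℝ)) :=
          exp_decay_mono C t hCt (by omega)
        have hE0'' : Real.exp (-C * t ^ 2 * ((n - N₀ : ℕ) : ℝ))
            ≤ Real.exp (-C * t ^ 2 * ((n + 1 - N₀ - 2 : ℕ) : ℝ)) :=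
          exp_decay_mono C t hCt (by omega)
        have hexpnn : ∀ x : ℝ, 0 ≤ Real.exp x := fun x => (Real.exp_pos x).le
        have hSn1 : S (n + 1) = S n + m := hSsucc n
        have hSn0 : 0 ≤ S n := hS0 n
        have h4S : 0 ≤ 4 * Real.pi ^ 2 * S n := mul_nonneg (by positivity) hSn0
        have h4m : 0 ≤ 4 * Real.pi ^ 2 * m := mul_nonneg (by positivity) hm0
        have h4St : 0 ≤ 4 * Real.pi ^ 2 * S n * |t| := mul_nonneg h4S (abs_nonneg t)
        have h4mt : 0 ≤ 4 * Real.pi ^ 2 * m * |t| := mul_nonneg h4m (abs_nonneg t)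
        have hcoefnn : 0 ≤ 4 * Real.pi ^ 2 * S n + 16 * Real.pi ^ 4 * S n ^ 2 * t ^ 2 :=
          add_nonneg h4S (by positivity)
        refine ⟨?_, ?_, ?_⟩
        · rw [hfteq]
          calc ‖ft (muN ν n) t * ft (ν (n + 1)) t‖
              = ‖ft (muN ν n) t‖ * ‖ft (ν (n + 1)) t‖ := norm_mul _ _
            _ ≤ Real.exp (-C * t ^ 2 * ((n - N₀ : ℕ) : ℝ)) * Real.exp (-C * t ^ 2 * (β : ℝ)) :=
                mul_le_mul hb0 hgb (norm_nonneg _) (hexpnn _)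
            _ = Real.exp (-C * t ^ 2 * ((n + 1 - N₀ : ℕ) : ℝ)) := hE0
        · calc ‖f₁ t * ft (ν (n + 1)) t + ft (muN ν n) t * G1 (ν (n + 1)) t‖
              ≤ ‖f₁ t‖ * ‖ft (ν (n + 1)) t‖ + ‖ft (muN ν n) t‖ * ‖G1 (ν (n + 1)) t‖ := by
                rw [← norm_mul, ← norm_mul]; exact norm_add_le _ _
            _ ≤ (4 * Real.pi ^ 2 * S n * |t| * Real.exp (-C * t ^ 2 * ((n - N₀ - 1 : ℕ) : ℝ)))
                  * Real.exp (-C * t ^ 2 * (β : ℝ))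
                + Real.exp (-C * t ^ 2 * ((n - N₀ : ℕ) : ℝ)) * (4 * Real.pi ^ 2 * m * |t|) := by
                refine add_le_add
                  (mul_le_mul hb1 hgb (norm_nonneg _) (mul_nonneg h4St (hexpnn _)))
                  (mul_le_mul hb0 hg1b (norm_nonneg _) (hexpnn _))
            _ ≤ 4 * Real.pi ^ 2 * S n * |t| * Real.exp (-C * t ^ 2 * ((n + 1 - N₀ - 1 : ℕ) : ℝ))
                + 4 * Real.pi ^ 2 * m * |t| * Real.exp (-C * t ^ 2 * ((n + 1 - N₀ - 1 : ℕ) : ℝ)) := by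
                refine add_le_add ?_ ?_
                · calc 4 * Real.pi ^ 2 * S n * |t| * Real.exp (-C * t ^ 2 * ((n - N₀ - 1 : ℕ) : ℝ))
                      * Real.exp (-C * t ^ 2 * (β : ℝ))
                      = 4 * Real.pi ^ 2 * S n * |t|
                        * (Real.exp (-C * t ^ 2 * ((n - N₀ - 1 : ℕ) : ℝ))
                          * Real.exp (-C * t ^ 2 * (β : ℝ))) := by ring
                    _ ≤ 4 * Real.pi ^ 2 * S n * |t|
                        * Real.exp (-C * t ^ 2 * ((n + 1 - N₀ - 1 : ℕ) : ℝ)) := by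
                        exact mul_le_mul_of_nonneg_left hE1 h4St
                · calc Real.exp (-C * t ^ 2 * ((n - N₀ : ℕ) : ℝ)) * (4 * Real.pi ^ 2 * m * |t|)
                      ≤ Real.exp (-C * t ^ 2 * ((n + 1 - N₀ - 1 : ℕ) : ℝ))
                        * (4 * Real.pi ^ 2 * m * |t|) :=
                        mul_le_mul_of_nonneg_right hE0' h4mt
                    _ = 4 * Real.pi ^ 2 * m * |t|
                        * Real.exp (-C * t ^ 2 * ((n + 1 - N₀ - 1 : ℕ) : ℝ)) := by ring
            _ = 4 * Real.pi ^ 2 * S (n + 1) * |t|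
                  * Real.exp (-C * t ^ 2 * ((n + 1 - N₀ - 1 : ℕ) : ℝ)) := by
                rw [hSn1]; ring
        · set E2 : ℝ := Real.exp (-C * t ^ 2 * ((n + 1 - N₀ - 2 : ℕ) : ℝ)) with hE2def
          have hE2nn : 0 ≤ E2 := hexpnn _
          calc ‖(f₂ t * ft (ν (n + 1)) t + f₁ t * G1 (ν (n + 1)) t)
                + (f₁ t * G1 (ν (n + 1)) t + ft (muN ν n) t * G2 (ν (n + 1)) t)‖
              ≤ ‖f₂ t‖ * ‖ft (ν (n + 1)) t‖ + ‖f₁ t‖ * ‖G1 (ν (n + 1)) t‖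
                + (‖f₁ t‖ * ‖G1 (ν (n + 1)) t‖ + ‖ft (muN ν n) t‖ * ‖G2 (ν (n + 1)) t‖) := by
                refine (norm_add_le _ _).trans ?_
                refine add_le_add ((norm_add_le _ _).trans ?_) ((norm_add_le _ _).trans ?_)
                · rw [norm_mul, norm_mul]
                · rw [norm_mul, norm_mul]
            _ ≤ ((4 * Real.pi ^ 2 * S n + 16 * Real.pi ^ 4 * S n ^ 2 * t ^ 2)
                   * Real.exp (-C * t ^ 2 * ((n - N₀ - 2 : ℕ) : ℝ)))
                   * Real.exp (-C * t ^ 2 * (β : ℝ))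
                + (4 * Real.pi ^ 2 * S n * |t| * Real.exp (-C * t ^ 2 * ((n - N₀ - 1 : ℕ) : ℝ)))
                   * (4 * Real.pi ^ 2 * m * |t|)
                + ((4 * Real.pi ^ 2 * S n * |t| * Real.exp (-C * t ^ 2 * ((n - N₀ - 1 : ℕ) : ℝ)))
                   * (4 * Real.pi ^ 2 * m * |t|)
                  + Real.exp (-C * t ^ 2 * ((n - N₀ : ℕ) : ℝ)) * (4 * Real.pi ^ 2 * m)) := by
                have c1 : 0 ≤ (4 * Real.pi ^ 2 * S n + 16 * Real.pi ^ 4 * S n ^ 2 * t ^ 2)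
                    * Real.exp (-C * t ^ 2 * ((n - N₀ - 2 : ℕ) : ℝ)) :=
                  mul_nonneg hcoefnn (hexpnn _)
                refine add_le_add (add_le_add
                  (mul_le_mul hb2 hgb (norm_nonneg _) c1)
                  (mul_le_mul hb1 hg1b (norm_nonneg _) (mul_nonneg h4St (hexpnn _))))
                  (add_le_add (mul_le_mul hb1 hg1b (norm_nonneg _) (mul_nonneg h4St (hexpnn _)))
                  (mul_le_mul hb0 hg2b (norm_nonneg _) (hexpnn _)))
            _ ≤ (4 * Real.pi ^ 2 * S n + 16 * Real.pi ^ 4 * S n ^ 2 * t ^ 2) * E2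
                + (4 * Real.pi ^ 2 * S n * |t|) * (4 * Real.pi ^ 2 * m * |t|) * E2
                + ((4 * Real.pi ^ 2 * S n * |t|) * (4 * Real.pi ^ 2 * m * |t|) * E2
                  + 4 * Real.pi ^ 2 * m * E2) := by
                have k1 : (4 * Real.pi ^ 2 * S n + 16 * Real.pi ^ 4 * S n ^ 2 * t ^ 2)
                    * Real.exp (-C * t ^ 2 * ((n - N₀ - 2 : ℕ) : ℝ))
                    * Real.exp (-C * t ^ 2 * (β : ℝ))
                    ≤ (4 * Real.pi ^ 2 * S n + 16 * Real.pi ^ 4 * S n ^ 2 * t ^ 2) * E2 := by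
                  rw [mul_assoc]
                  exact mul_le_mul_of_nonneg_left hE2 hcoefnn
                have k2 : (4 * Real.pi ^ 2 * S n * |t|
                      * Real.exp (-C * t ^ 2 * ((n - N₀ - 1 : ℕ) : ℝ)))
                    * (4 * Real.pi ^ 2 * m * |t|)
                    ≤ (4 * Real.pi ^ 2 * S n * |t|) * (4 * Real.pi ^ 2 * m * |t|) * E2 := by
                  calc (4 * Real.pi ^ 2 * S n * |t|
                        * Real.exp (-C * t ^ 2 * ((n - N₀ - 1 : ℕ) : ℝ)))
                      * (4 * Real.pi ^ 2 * m * |t|)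
                      = (4 * Real.pi ^ 2 * S n * |t|) * (4 * Real.pi ^ 2 * m * |t|)
                        * Real.exp (-C * t ^ 2 * ((n - N₀ - 1 : ℕ) : ℝ)) := by ring
                    _ ≤ (4 * Real.pi ^ 2 * S n * |t|) * (4 * Real.pi ^ 2 * m * |t|) * E2 :=
                        mul_le_mul_of_nonneg_left hE1' (mul_nonneg h4St h4mt)
                have k3 : Real.exp (-C * t ^ 2 * ((n - N₀ : ℕ) : ℝ)) * (4 * Real.pi ^ 2 * m)
                    ≤ 4 * Real.pi ^ 2 * m * E2 := by
                  calc Real.exp (-C * t ^ 2 * ((n - N₀ : ℕ) : ℝ)) * (4 * Real.pi ^ 2 * m)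
                      = (4 * Real.pi ^ 2 * m) * Real.exp (-C * t ^ 2 * ((n - N₀ : ℕ) : ℝ)) := by
                        ring
                    _ ≤ 4 * Real.pi ^ 2 * m * E2 :=
                        mul_le_mul_of_nonneg_left hE0'' h4m
                exact add_le_add (add_le_add k1 k2) (add_le_add k2 k3)
            _ ≤ (4 * Real.pi ^ 2 * S (n + 1) + 16 * Real.pi ^ 4 * S (n + 1) ^ 2 * t ^ 2) * E2 := by
                rw [hSn1]
                have hcoef : 4 * Real.pi ^ 2 * S n + 16 * Real.pi ^ 4 * S n ^ 2 * t ^ 2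
                    + (4 * Real.pi ^ 2 * S n * |t|) * (4 * Real.pi ^ 2 * m * |t|)
                    + ((4 * Real.pi ^ 2 * S n * |t|) * (4 * Real.pi ^ 2 * m * |t|)
                      + 4 * Real.pi ^ 2 * m)
                    ≤ 4 * Real.pi ^ 2 * (S n + m) + 16 * Real.pi ^ 4 * (S n + m) ^ 2 * t ^ 2 := by
                  have habs : |t| * |t| = t ^ 2 := by rw [abs_mul_abs_self]; ring
                  have hprod : (4 * Real.pi ^ 2 * S n * |t|) * (4 * Real.pi ^ 2 * m * |t|)
                      = 16 * Real.pi ^ 4 * S n * m * t ^ 2 := by rw [← habs]; ring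
                  rw [hprod]
                  nlinarith [mul_nonneg (mul_nonneg
                    (by positivity : (0:ℝ) ≤ 16 * Real.pi ^ 4) (sq_nonneg m)) (sq_nonneg t)]
                calc (4 * Real.pi ^ 2 * S n + 16 * Real.pi ^ 4 * S n ^ 2 * t ^ 2) * E2
                    + (4 * Real.pi ^ 2 * S n * |t|) * (4 * Real.pi ^ 2 * m * |t|) * E2
                    + ((4 * Real.pi ^ 2 * S n * |t|) * (4 * Real.pi ^ 2 * m * |t|) * E2
                      + 4 * Real.pi ^ 2 * m * E2)
                    = (4 * Real.pi ^ 2 * S n + 16 * Real.pi ^ 4 * S n ^ 2 * t ^ 2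
                      + (4 * Real.pi ^ 2 * S n * |t|) * (4 * Real.pi ^ 2 * m * |t|)
                      + ((4 * Real.pi ^ 2 * S n * |t|) * (4 * Real.pi ^ 2 * m * |t|)
                        + 4 * Real.pi ^ 2 * m)) * E2 := by ring
                  _ ≤ (4 * Real.pi ^ 2 * (S n + m) + 16 * Real.pi ^ 4 * (S n + m) ^ 2 * t ^ 2)
                      * E2 := mul_le_mul_of_nonneg_right hcoef hE2nn

  -- bound the integral for each n
  -- final bound
  set coefA : ℝ := 4 * Real.pi ^ 2 * (K * (2 * N₀ + 6)) + 4 * Real.pi ^ 4 * (K * (2 * N₀ + 6)) ^ 2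
    with hcoefAdef
  set BB : ℝ := 24 * Real.pi ^ 2 * K / C + 576 * Real.pi ^ 4 * K ^ 2 / C ^ 2 with hBBdef
  refine ⟨max (coefA / 4) BB, fun n => ?_⟩
  obtain ⟨f₁, f₂, hd1, hd2, hc2, hbd⟩ := inv n
  have hiter : iteratedDeriv 2 (ft (muN ν n)) = f₂ := by
    have hD : deriv (ft (muN ν n)) = f₁ := funext fun t => (hd1 t).deriv
    have hI : iteratedDeriv 2 (ft (muN ν n)) = deriv (deriv (ft (muN ν n))) := by
      rw [iteratedDeriv_succ, iteratedDeriv_one]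
    rw [hI, hD]
    exact funext fun t => (hd2 t).deriv
  rw [hiter]
  have hle : -(1 : ℝ) / 2 ≤ 1 / 2 := by norm_num
  have hcontI : Continuous fun t : ℝ => ‖f₂ t‖ * |t| := hc2.norm.mul continuous_abs
  have hexpnn : ∀ x : ℝ, 0 ≤ Real.exp x := fun x => (Real.exp_pos x).le
  by_cases hn : n < 2 * N₀ + 6
  · -- small n : crude bound
    have hSb : S n ≤ K * (2 * N₀ + 6) := by
      have h1 := hSK n
      have h2 : ((n : ℝ) + 1) ≤ (2 * N₀ + 6 : ℝ) := by
        have : (n : ℝ) + 1 ≤ ((2 * N₀ + 6 : ℕ) : ℝ) := by exact_mod_cast Nat.succ_le_of_lt hn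
        simpa using this
      nlinarith [hK0]
    have hcA : 0 ≤ K * (2 * N₀ + 6) := by positivity
    have hpt : ∀ t ∈ Set.Icc (-(1 : ℝ) / 2) (1 / 2), ‖f₂ t‖ * |t| ≤ coefA * |t| := by
      intro t ht
      obtain ⟨-, -, hb2⟩ := hbd t ht
      have ht2 : t ^ 2 ≤ 1 / 4 := by
        have h1 : |t| ≤ 1 / 2 := abs_le.mpr ⟨by linarith [ht.1], ht.2⟩
        nlinarith [abs_nonneg t, sq_abs t]
      have hexp1 : Real.exp (-C * t ^ 2 * ((n - N₀ - 2 : ℕ) : ℝ)) ≤ 1 := by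
        rw [Real.exp_le_one_iff]
        have : 0 ≤ C * t ^ 2 * ((n - N₀ - 2 : ℕ) : ℝ) := by positivity
        nlinarith
      have hcoefnn : 0 ≤ 4 * Real.pi ^ 2 * S n + 16 * Real.pi ^ 4 * S n ^ 2 * t ^ 2 :=
        add_nonneg (mul_nonneg (by positivity) (hS0 n)) (by positivity)
      have hN : ‖f₂ t‖ ≤ coefA := by
        have h3 : ‖f₂ t‖ ≤ 4 * Real.pi ^ 2 * S n + 16 * Real.pi ^ 4 * S n ^ 2 * t ^ 2 := by
          calc ‖f₂ t‖ ≤ (4 * Real.pi ^ 2 * S n + 16 * Real.pi ^ 4 * S n ^ 2 * t ^ 2)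
              * Real.exp (-C * t ^ 2 * ((n - N₀ - 2 : ℕ) : ℝ)) := hb2
            _ ≤ (4 * Real.pi ^ 2 * S n + 16 * Real.pi ^ 4 * S n ^ 2 * t ^ 2) * 1 :=
              mul_le_mul_of_nonneg_left hexp1 hcoefnn
            _ = _ := mul_one _
        rw [hcoefAdef]
        have hSn2 : S n ^ 2 ≤ (K * (2 * N₀ + 6)) ^ 2 := by nlinarith [hS0 n]
        have hA1 : 4 * Real.pi ^ 2 * S n ≤ 4 * Real.pi ^ 2 * (K * (2 * N₀ + 6)) := by
          rw [mul_le_mul_iff_right₀ (by positivity : (0:ℝ) < 4 * Real.pi ^ 2)] at *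
          · exact hSb
        have hA2 : 16 * Real.pi ^ 4 * S n ^ 2 * t ^ 2 ≤ 16 * Real.pi ^ 4 * S n ^ 2 * (1 / 4) :=
          mul_le_mul_of_nonneg_left ht2
            (mul_nonneg (by positivity) (sq_nonneg (S n)))
        have hA4 : 4 * Real.pi ^ 4 * S n ^ 2 ≤ 4 * Real.pi ^ 4 * (K * (2 * N₀ + 6)) ^ 2 :=
          mul_le_mul_of_nonneg_left hSn2 (by positivity)
        have hA3 : 16 * Real.pi ^ 4 * S n ^ 2 * (1 / 4) = 4 * Real.pi ^ 4 * S n ^ 2 := by ring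
        linarith [h3, hA1, hA2, hA4, hA3]
      exact mul_le_mul_of_nonneg_right hN (abs_nonneg t)
    calc (∫ t in (-(1 : ℝ) / 2)..(1 / 2), ‖f₂ t‖ * |t|)
        ≤ ∫ t in (-(1 : ℝ) / 2)..(1 / 2), coefA * |t| :=
          intervalIntegral.integral_mono_on hle (hcontI.intervalIntegrable _ _)
            ((continuous_const.mul continuous_abs).intervalIntegrable _ _) hpt
      _ = coefA * (1 / 4) := by
          rw [intervalIntegral.integral_const_mul, integral_abs_half]
      _ = coefA / 4 := by ring
      _ ≤ max (coefA / 4) BB := le_max_left _ _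
  · -- large n : gaussian decay
    push_neg at hn
    set M : ℕ := n - N₀ - 2 with hMdef
    have hM1 : 1 ≤ M := by omega
    have hMR : (1 : ℝ) ≤ (M : ℝ) := by exact_mod_cast hM1
    set b : ℝ := C * M with hbdef
    have hb : 0 < b := mul_pos hC (by linarith)
    have hn3 : ((n : ℝ) + 1) ≤ 3 * (M : ℝ) := by
      have : n + 1 ≤ 3 * M := by omega
      exact_mod_cast this
    set cB : ℝ := 4 * Real.pi ^ 2 * S n + 32 * Real.pi ^ 4 * S n ^ 2 / b with hcBdef
    have hcB0 : 0 ≤ cB := add_nonneg (mul_nonneg (by positivity) (hS0 n))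
      (div_nonneg (mul_nonneg (by positivity) (sq_nonneg _)) hb.le)
    have hpt : ∀ t ∈ Set.Icc (-(1 : ℝ) / 2) (1 / 2),
        ‖f₂ t‖ * |t| ≤ cB * (|t| * Real.exp (-(b / 2 * t ^ 2))) := by
      intro t ht
      obtain ⟨-, -, hb2⟩ := hbd t ht
      have he : Real.exp (-C * t ^ 2 * ((M : ℕ) : ℝ)) = Real.exp (-(b * t ^ 2)) := by
        congr 1; rw [hbdef]; ring
      have key := key_ptwise Real.pi (S n) b t Real.pi_nonneg (hS0 n) hb
      calc ‖f₂ t‖ * |t|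
          ≤ ((4 * Real.pi ^ 2 * S n + 16 * Real.pi ^ 4 * S n ^ 2 * t ^ 2)
              * Real.exp (-(b * t ^ 2))) * |t| := by
            refine mul_le_mul_of_nonneg_right ?_ (abs_nonneg t)
            rw [← he]; exact hb2
        _ ≤ ((4 * Real.pi ^ 2 * S n + 32 * Real.pi ^ 4 * S n ^ 2 / b)
              * Real.exp (-(b / 2 * t ^ 2))) * |t| :=
            mul_le_mul_of_nonneg_right key (abs_nonneg t)
        _ = cB * (|t| * Real.exp (-(b / 2 * t ^ 2))) := by rw [hcBdef]; ring
    have hb2pos : 0 < b / 2 := by linarith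
    calc (∫ t in (-(1 : ℝ) / 2)..(1 / 2), ‖f₂ t‖ * |t|)
        ≤ ∫ t in (-(1 : ℝ) / 2)..(1 / 2), cB * (|t| * Real.exp (-(b / 2 * t ^ 2))) :=
          intervalIntegral.integral_mono_on hle (hcontI.intervalIntegrable _ _)
            ((continuous_const.mul ((continuous_abs.mul (by fun_prop)))).intervalIntegrable _ _)
            hpt
      _ = cB * ∫ t in (-(1 : ℝ) / 2)..(1 / 2), |t| * Real.exp (-(b / 2 * t ^ 2)) :=
          intervalIntegral.integral_const_mul _ _
      _ ≤ cB * (1 / (b / 2)) :=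
          mul_le_mul_of_nonneg_left (integral_abs_exp_le (b / 2) hb2pos) hcB0
      _ ≤ BB := by
          have hS3 : S n ≤ 3 * K * (M : ℝ) := by
            calc S n ≤ K * (n + 1) := hSK n
              _ ≤ K * (3 * (M : ℝ)) := mul_le_mul_of_nonneg_left hn3 hK0
              _ = 3 * K * (M : ℝ) := by ring
          have hbne : b ≠ 0 := ne_of_gt hb
          have hCne : C ≠ 0 := ne_of_gt hC
          have hMne : (M : ℝ) ≠ 0 := by linarith
          have h1 : cB * (1 / (b / 2))
              = (8 * Real.pi ^ 2 * S n * b + 64 * Real.pi ^ 4 * S n ^ 2) / b ^ 2 := by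
            rw [hcBdef]; field_simp; ring
          rw [h1, div_le_iff₀ (by positivity : (0:ℝ) < b ^ 2), hBBdef]
          have hBBb : (24 * Real.pi ^ 2 * K / C + 576 * Real.pi ^ 4 * K ^ 2 / C ^ 2) * b ^ 2
              = 24 * Real.pi ^ 2 * K * C * (M : ℝ) ^ 2 + 576 * Real.pi ^ 4 * K ^ 2 * (M : ℝ) ^ 2 := by
            rw [hbdef]; field_simp
          rw [hBBb]
          have hSn0 := hS0 n
          have hMpos : (0:ℝ) < (M : ℝ) := by linarith
          have hsq : S n ^ 2 ≤ 9 * K ^ 2 * (M : ℝ) ^ 2 := by nlinarith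
          have hlin : 8 * Real.pi ^ 2 * S n * b ≤ 24 * Real.pi ^ 2 * K * C * (M : ℝ) ^ 2 := by
            rw [hbdef]
            have : 8 * Real.pi ^ 2 * C * (M : ℝ) * S n
                ≤ 8 * Real.pi ^ 2 * C * (M : ℝ) * (3 * K * (M : ℝ)) :=
              mul_le_mul_of_nonneg_left hS3 (by positivity)
            nlinarith
          nlinarith [mul_le_mul_of_nonneg_left hsq
            (by positivity : (0:ℝ) ≤ 64 * Real.pi ^ 4)]
      _ ≤ max (coefA / 4) BB := le_max_right _ _
end

section
/- Let μ be a probability measure on ℤ and let b be a real number with 0 < b < 1/4. If there is a constant c < 1 such that |μ̂(t)| ≤ c for all t with b ≤ |t| < 1/2, then |μ̂(t)| ≤ 1 − ((1 − c²)/(8b²)) t² for all t with |t| ≤ b. -/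
open scoped BigOperators
open Filter MeasureTheory

open Complex in
lemma abs_sin_nat_mul (n : ℕ) (x : ℝ) : |Real.sin (n * x)| ≤ n * |Real.sin x| := by
  induction n with
  | zero => simp
  | succ n ih =>
    have e : ((n:ℝ)+1) * x = n*x + x := by ring
    rw [Nat.cast_succ, e, Real.sin_add]
    have h1 := Real.abs_cos_le_one x
    have h2 := Real.abs_cos_le_one ((n:ℝ)*x)
    have h3 := abs_nonneg (Real.sin ((n:ℝ)*x))
    have h4 := abs_nonneg (Real.sin x)
    calc |Real.sin (n*x) * Real.cos x + Real.cos (n*x) * Real.sin x|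
        ≤ |Real.sin (n*x) * Real.cos x| + |Real.cos (n*x) * Real.sin x| := abs_add_le _ _
      _ ≤ |Real.sin (n*x)| + |Real.sin x| := by
          rw [abs_mul, abs_mul]; nlinarith
      _ ≤ (n:ℝ)*|Real.sin x| + |Real.sin x| := by linarith
      _ = ((n:ℝ)+1)*|Real.sin x| := by ring

lemma one_sub_cos_nat_mul (n : ℕ) (x : ℝ) :
    1 - Real.cos (n * x) ≤ (n:ℝ)^2 * (1 - Real.cos x) := by
  have key : ∀ y : ℝ, 1 - Real.cos (2*y) = 2 * Real.sin y ^ 2 := by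
    intro y
    nlinarith [Real.sin_sq_add_cos_sq y, Real.cos_two_mul y]
  have h1 : (n:ℝ) * x = 2 * ((n:ℝ) * (x/2)) := by ring
  have h2 : x = 2 * (x/2) := by ring
  have e1 := key ((n:ℝ)*(x/2)); rw [← h1] at e1
  have e2 := key (x/2); rw [← h2] at e2
  have hs := abs_sin_nat_mul n (x/2)
  have h3 : Real.sin ((n:ℝ)*(x/2))^2 ≤ ((n:ℝ) * |Real.sin (x/2)|)^2 := by
    rw [← _root_.sq_abs]
    exact pow_le_pow_left₀ (abs_nonneg _) hs 2
  rw [mul_pow, _root_.sq_abs] at h3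
  nlinarith

open Complex in
set_option maxHeartbeats 1000000 in
lemma hasSum_cos (μ : ℤ → ℝ) (hμ : IsProbMeasure μ) (s : ℝ) :
    HasSum (fun p : ℤ × ℤ => μ p.1 * μ p.2 *
      Real.cos (2 * Real.pi * ((p.1 : ℝ) - (p.2 : ℝ)) * s)) (‖ft μ s‖ ^ 2) := by
  obtain ⟨hpos, hsum⟩ := hμ
  set a : ℤ → ℂ := fun k => (μ k : ℂ) * Complex.exp ((2 * Real.pi * (k:ℝ) * s : ℝ) * I) with ha
  have hft : ft μ s = ∑' k, a k := by
    unfold ft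
    apply tsum_congr
    intro k
    congr 1
    congr 1
    push_cast
    ring
  have hnorm : ∀ k, ‖a k‖ = μ k := by
    intro k
    rw [ha]
    simp only [norm_mul, Complex.norm_real, Real.norm_eq_abs,
      Complex.norm_exp_ofReal_mul_I, mul_one]
    exact abs_of_nonneg (hpos k)
  have hsa : Summable a := by
    apply Summable.of_norm
    simpa only [hnorm] using hsum.summable
  have hA : HasSum a (ft μ s) := by rw [hft]; exact hsa.hasSum
  have hAs : HasSum (fun k => starRingEnd ℂ (a k)) (starRingEnd ℂ (ft μ s)) := hA.star
  have hprod : Summable (fun p : ℤ × ℤ => a p.1 * starRingEnd ℂ (a p.2)) := by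
    apply Summable.of_norm
    have : Summable (fun p : ℤ × ℤ => μ p.1 * μ p.2) :=
      hsum.summable.mul_of_nonneg hsum.summable hpos hpos
    apply this.congr
    intro p
    simp [norm_mul, hnorm, RCLike.norm_conj]
  have hP : HasSum (fun p : ℤ × ℤ => a p.1 * starRingEnd ℂ (a p.2))
      (ft μ s * starRingEnd ℂ (ft μ s)) := by
    have hn1 : Summable fun k => ‖a k‖ := by
      simpa only [hnorm] using hsum.summable
    have hn2 : Summable fun k => ‖starRingEnd ℂ (a k)‖ := by
      simpa only [RCLike.norm_conj] using hn1
    have htsum : ∑' p : ℤ × ℤ, a p.1 * starRingEnd ℂ (a p.2)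
        = ft μ s * starRingEnd ℂ (ft μ s) := by
      rw [← tsum_mul_tsum_of_summable_norm hn1 hn2, hA.tsum_eq, hAs.tsum_eq]
    exact htsum ▸ hprod.hasSum
  have hre := Complex.hasSum_re hP
  have hval : (ft μ s * starRingEnd ℂ (ft μ s)).re = ‖ft μ s‖ ^ 2 := by
    rw [Complex.mul_conj]
    simp [Complex.normSq_eq_norm_sq, ← Complex.ofReal_pow]
  rw [hval] at hre
  have key : (fun p : ℤ × ℤ => (a p.1 * starRingEnd ℂ (a p.2)).re)
      = fun p : ℤ × ℤ => μ p.1 * μ p.2 *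
        Real.cos (2 * Real.pi * ((p.1 : ℝ) - (p.2 : ℝ)) * s) := by
    funext p
    have harg : 2*Real.pi*((p.1:ℝ)-(p.2:ℝ))*s
        = 2*Real.pi*(p.1:ℝ)*s - 2*Real.pi*(p.2:ℝ)*s := by ring
    rw [harg, Real.cos_sub]
    simp only [ha]
    have c2 : starRingEnd ℂ ((μ p.2 : ℂ) * Complex.exp (((2*Real.pi*(p.2:ℝ)*s : ℝ)) * I)) =
        (μ p.2 : ℂ) * Complex.exp (((-(2*Real.pi*(p.2:ℝ)*s)) : ℝ) * I) := by
      rw [map_mul, Complex.conj_ofReal, ← Complex.exp_conj]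
      congr 1
      rw [map_mul, Complex.conj_ofReal, Complex.conj_I]
      push_cast
      ring
    rw [c2]
    simp only [Complex.mul_re, Complex.mul_im, Complex.ofReal_re, Complex.ofReal_im,
      Complex.exp_ofReal_mul_I_re, Complex.exp_ofReal_mul_I_im, Real.cos_neg, Real.sin_neg]
    ring
  rw [← key]
  exact hre

lemma hasSum_one_sub_cos (μ : ℤ → ℝ) (hμ : IsProbMeasure μ) (s : ℝ) :
    HasSum (fun p : ℤ × ℤ => μ p.1 * μ p.2 *
      (1 - Real.cos (2 * Real.pi * ((p.1 : ℝ) - (p.2 : ℝ)) * s))) (1 - ‖ft μ s‖ ^ 2) := by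
  have h1 : HasSum (fun p : ℤ × ℤ => μ p.1 * μ p.2) 1 := by
    have := hμ.2.mul hμ.2 (hμ.2.summable.mul_of_nonneg hμ.2.summable hμ.1 hμ.1)
    simpa using this
  have := h1.sub (hasSum_cos μ hμ s)
  convert this using 2 with p
  case e'_3 => rfl
  case e'_5 => ring

lemma ft_norm_le_one (μ : ℤ → ℝ) (hμ : IsProbMeasure μ) (s : ℝ) : ‖ft μ s‖ ≤ 1 := by
  obtain ⟨hpos, hsum⟩ := hμ
  have hnorm : ∀ k : ℤ, ‖(μ k : ℂ) * Complex.exp (2 * Real.pi * Complex.I * (k : ℂ) * (s : ℂ))‖ = μ k := by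
    intro k
    have e : (2 * Real.pi * Complex.I * (k : ℂ) * (s : ℂ)) = ((2 * Real.pi * (k:ℝ) * s : ℝ) : ℂ) * Complex.I := by
      push_cast; ring
    rw [e, norm_mul, Complex.norm_real, Real.norm_eq_abs,
      Complex.norm_exp_ofReal_mul_I, mul_one, abs_of_nonneg (hpos k)]
  have hs : Summable fun k : ℤ => ‖(μ k : ℂ) * Complex.exp (2 * Real.pi * Complex.I * (k : ℂ) * (s : ℂ))‖ := by
    simpa only [hnorm] using hsum.summable
  calc ‖ft μ s‖ ≤ ∑' k : ℤ, ‖(μ k : ℂ) * Complex.exp (2 * Real.pi * Complex.I * (k : ℂ) * (s : ℂ))‖ :=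
        norm_tsum_le_tsum_norm hs
    _ = ∑' k : ℤ, μ k := tsum_congr hnorm
    _ = 1 := hsum.tsum_eq


/-- Lemma 2.1.5: if `|μ̂(t)| ≤ c < 1` for `b ≤ |t| < 1/2`, with
`0 < b < 1/4`, then `|μ̂(t)| ≤ 1 - ((1 - c²)/(8b²)) t²` for `|t| ≤ b`. -/
theorem fourier_bound_near_zero
    (μ : ℤ → ℝ) (hμ : IsProbMeasure μ) (b c : ℝ)
    (hb0 : 0 < b) (hb : b < 1 / 4) (hc : c < 1)
    (h : ∀ t : ℝ, b ≤ |t| → |t| < 1 / 2 → ‖ft μ t‖ ≤ c) :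
    ∀ t : ℝ, |t| ≤ b → ‖ft μ t‖ ≤ 1 - (1 - c ^ 2) / (8 * b ^ 2) * t ^ 2 := by
  intro t ht
  rcases eq_or_ne t 0 with rfl | ht0
  · simpa using ft_norm_le_one μ hμ 0
  have htpos : 0 < |t| := abs_pos.mpr ht0
  set n : ℕ := ⌈b / |t|⌉₊ with hn
  have hn1 : 1 ≤ n := Nat.ceil_pos.mpr (div_pos hb0 htpos)
  have hlow : b ≤ n * |t| := by
    have := Nat.le_ceil (b / |t|)
    calc b = b / |t| * |t| := by field_simp
      _ ≤ n * |t| := by gcongr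
  have hhigh : (n:ℝ) * |t| ≤ 2 * b := by
    have h1 : (n:ℝ) < b / |t| + 1 := Nat.ceil_lt_add_one (le_of_lt (div_pos hb0 htpos))
    have h2 : (n:ℝ) * |t| < (b / |t| + 1) * |t| := by gcongr
    have h3 : (b / |t| + 1) * |t| = b + |t| := by field_simp
    nlinarith
  -- ‖ft μ (n*t)‖ ≤ c
  have habs : |(n:ℝ) * t| = n * |t| := by
    rw [abs_mul, Nat.abs_cast]
  have hcs : ‖ft μ ((n:ℝ) * t)‖ ≤ c := by
    apply h ((n:ℝ)*t)
    · rw [habs]; exact hlow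
    · rw [habs]; linarith
  have hc0 : 0 ≤ c := le_trans (norm_nonneg _) hcs
  -- comparison of sums
  have hS := hasSum_one_sub_cos μ hμ ((n:ℝ) * t)
  have hT := (hasSum_one_sub_cos μ hμ t).mul_left ((n:ℝ)^2)
  have hle : 1 - ‖ft μ ((n:ℝ)*t)‖^2 ≤ (n:ℝ)^2 * (1 - ‖ft μ t‖^2) := by
    apply hasSum_le _ hS hT
    intro p
    have harg : 2 * Real.pi * ((p.1 : ℝ) - (p.2 : ℝ)) * ((n:ℝ) * t)
        = (n:ℝ) * (2 * Real.pi * ((p.1 : ℝ) - (p.2 : ℝ)) * t) := by ring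
    rw [harg]
    have hkey := one_sub_cos_nat_mul n (2 * Real.pi * ((p.1 : ℝ) - (p.2 : ℝ)) * t)
    have hmm : 0 ≤ μ p.1 * μ p.2 := mul_nonneg (hμ.1 p.1) (hμ.1 p.2)
    calc μ p.1 * μ p.2 * (1 - Real.cos ((n:ℝ) * (2 * Real.pi * ((p.1 : ℝ) - (p.2 : ℝ)) * t)))
        ≤ μ p.1 * μ p.2 * ((n:ℝ)^2 * (1 - Real.cos (2 * Real.pi * ((p.1 : ℝ) - (p.2 : ℝ)) * t))) := by
          apply mul_le_mul_of_nonneg_left _ hmm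
          exact hkey
      _ = (n:ℝ)^2 * (μ p.1 * μ p.2 * (1 - Real.cos (2 * Real.pi * ((p.1 : ℝ) - (p.2 : ℝ)) * t))) := by ring
  -- assemble
  have hx1 : ‖ft μ t‖ ≤ 1 := ft_norm_le_one μ hμ t
  have hx0 : 0 ≤ ‖ft μ t‖ := norm_nonneg _
  have hcc : 1 - c^2 ≤ 1 - ‖ft μ ((n:ℝ)*t)‖^2 := by
    have := pow_le_pow_left₀ (norm_nonneg _) hcs 2
    linarith
  have hnt : (n:ℝ)^2 * t^2 ≤ 4 * b^2 := by
    have : ((n:ℝ) * |t|)^2 ≤ (2*b)^2 := by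
      apply pow_le_pow_left₀ (by positivity) hhigh
    calc (n:ℝ)^2 * t^2 = ((n:ℝ) * |t|)^2 := by rw [mul_pow, sq_abs]
      _ ≤ (2*b)^2 := this
      _ = 4 * b^2 := by ring
  have hb8 : (0:ℝ) < 8 * b^2 := by positivity
  rw [show (1:ℝ) - (1 - c ^ 2) / (8 * b ^ 2) * t ^ 2 = 1 - (1 - c^2) * t^2 / (8 * b^2) by ring,
    le_sub_comm, div_le_iff₀ hb8]
  -- goal : (1 - c^2) * t^2 ≤ (1 - ‖ft μ t‖) * (8 * b^2)
  have key : (1 - c^2) * t^2 ≤ (n:ℝ)^2 * (1 - ‖ft μ t‖^2) * t^2 := by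
    have : 1 - c^2 ≤ (n:ℝ)^2 * (1 - ‖ft μ t‖^2) := le_trans hcc hle
    exact mul_le_mul_of_nonneg_right this (sq_nonneg t)
  have h2 : (n:ℝ)^2 * (1 - ‖ft μ t‖^2) * t^2 ≤ 4 * b^2 * (1 - ‖ft μ t‖^2) := by
    have hnn : 0 ≤ 1 - ‖ft μ t‖^2 := by nlinarith
    calc (n:ℝ)^2 * (1 - ‖ft μ t‖^2) * t^2 = ((n:ℝ)^2 * t^2) * (1 - ‖ft μ t‖^2) := by ring
      _ ≤ 4 * b^2 * (1 - ‖ft μ t‖^2) := mul_le_mul_of_nonneg_right hnt hnn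
  have h3 : 4 * b^2 * (1 - ‖ft μ t‖^2) ≤ (1 - ‖ft μ t‖) * (8 * b^2) := by
    nlinarith [sq_nonneg (1 - ‖ft μ t‖), sq_nonneg b]
  linarith
end

section
/- If μ is a strictly aperiodic probability measure on ℤ, then there exist constants 0 ≤ c < 1 and d > 0 such that |μ̂(t)| ≤ 1 − ((1 − c²)/(8d²)) t² for all |t| ≤ d; consequently there exists a constant C > 0 such that |μ̂(t)| ≤ e^{−Ct²} for all t ∈ [−1/2, 1/2). -/
open scoped BigOperators
open Filter MeasureTheory

lemma expo_eq (k : ℤ) (t : ℝ) :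
    2 * (Real.pi : ℂ) * Complex.I * (k : ℂ) * (t : ℂ)
      = ((2 * Real.pi * k * t : ℝ) : ℂ) * Complex.I := by
  push_cast; ring

lemma term_eq (ν : ℤ → ℝ) (t : ℝ) (k : ℤ) :
    (ν k : ℂ) * Complex.exp (2 * Real.pi * Complex.I * (k : ℂ) * (t : ℂ))
      = (ν k : ℂ) * Complex.exp (((2 * Real.pi * k * t : ℝ) : ℂ) * Complex.I) := by
  rw [expo_eq]

lemma term_norm (ν : ℤ → ℝ) (hν : ∀ k, 0 ≤ ν k) (t : ℝ) (k : ℤ) :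
    ‖(ν k : ℂ) * Complex.exp (2 * Real.pi * Complex.I * (k : ℂ) * (t : ℂ))‖ = ν k := by
  rw [term_eq, norm_mul, Complex.norm_exp_ofReal_mul_I,
    mul_one, Complex.norm_real, Real.norm_eq_abs, abs_of_nonneg (hν k)]

lemma summable_term (ν : ℤ → ℝ) (hs : Summable ν) (hν : ∀ k, 0 ≤ ν k) (t : ℝ) :
    Summable (fun k : ℤ => (ν k : ℂ) * Complex.exp (2 * Real.pi * Complex.I * (k : ℂ) * (t : ℂ))) := by
  apply Summable.of_norm
  have : (fun k : ℤ => ‖(ν k : ℂ) * Complex.exp (2 * Real.pi * Complex.I * (k : ℂ) * (t : ℂ))‖) = ν :=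
    funext (term_norm ν hν t)
  rw [this]; exact hs

lemma norm_ft_le (ν : ℤ → ℝ) (hν : ∀ k, 0 ≤ ν k) (h1 : HasSum ν 1) (t : ℝ) : ‖ft ν t‖ ≤ 1 := by
  rw [ft]
  have hs : Summable ν := h1.summable
  calc ‖∑' k : ℤ, (ν k : ℂ) * Complex.exp (2 * Real.pi * Complex.I * (k : ℂ) * (t : ℂ))‖
      ≤ ∑' k : ℤ, ‖(ν k : ℂ) * Complex.exp (2 * Real.pi * Complex.I * (k : ℂ) * (t : ℂ))‖ :=
        norm_tsum_le_tsum_norm (by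
          have : (fun k : ℤ => ‖(ν k : ℂ) * Complex.exp (2 * Real.pi * Complex.I * (k : ℂ) * (t : ℂ))‖) = ν :=
            funext (term_norm ν hν t)
          rw [this]; exact hs)
    _ = 1 := by
        have : (fun k : ℤ => ‖(ν k : ℂ) * Complex.exp (2 * Real.pi * Complex.I * (k : ℂ) * (t : ℂ))‖) = ν :=
          funext (term_norm ν hν t)
        rw [this, h1.tsum_eq]

lemma cont_ft (ν : ℤ → ℝ) (hν : ∀ k, 0 ≤ ν k) (hs : Summable ν) : Continuous (ft ν) := by
  show Continuous fun t : ℝ => ∑' k : ℤ, (ν k : ℂ) * Complex.exp (2 * Real.pi * Complex.I * (k : ℂ) * (t : ℂ))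
  apply continuous_tsum (u := ν) _ hs
  · intro k t
    rw [term_norm ν hν t k]
  · intro k
    fun_prop







lemma norm_ft_lt_one (μ : ℤ → ℝ) (hν : ∀ k, 0 ≤ μ k) (h1 : HasSum μ 1)
    (hap : StrictlyAperiodic μ) {t : ℝ} (ht0 : t ≠ 0) (ht : |t| ≤ 1/2) :
    ‖ft μ t‖ < 1 := by
  rcases lt_or_ge ‖ft μ t‖ 1 with h | h
  · exact h
  exfalso
  have hnorm : ‖ft μ t‖ = 1 := le_antisymm (norm_ft_le μ hν h1 t) h
  set g : ℤ → ℂ := fun k => (μ k : ℂ) * Complex.exp (2 * Real.pi * Complex.I * (k : ℂ) * (t : ℂ)) with hg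
  have hsumg : HasSum g (ft μ t) := (summable_term μ h1.summable hν t).hasSum
  set s := ft μ t with hsdef
  set w := (starRingEnd ℂ) s with hw
  -- the real sum ∑ μ k - (w * g k).re has sum 0
  have hws : (w * s).re = 1 := by
    rw [hw, mul_comm, Complex.mul_conj]
    simp [Complex.normSq_eq_norm_sq, hnorm]
  have hsum2 : HasSum (fun k => (w * g k).re) 1 := by
    have := Complex.reCLM.hasSum ((hsumg.mul_left w))
    simpa [hws] using this
  have hf : HasSum (fun k => μ k - (w * g k).re) 0 := by
    simpa using h1.sub hsum2
  have hnonneg : ∀ k, 0 ≤ μ k - (w * g k).re := by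
    intro k
    have h1' : (w * g k).re ≤ ‖w * g k‖ := Complex.re_le_norm _
    have h2' : ‖w * g k‖ = μ k := by
      rw [norm_mul, hw, Complex.norm_conj, hnorm,
        one_mul, term_norm μ hν t k]
    linarith
  have hzero : ∀ k, μ k - (w * g k).re = 0 := by
    intro k
    have hle : μ k - (w * g k).re ≤ 0 := by
      have := Summable.le_tsum hf.summable k (fun j _ => hnonneg j)
      rwa [hf.tsum_eq] at this
    linarith [hnonneg k]
  -- for support points, w * e_k = 1
  have hkey : ∀ k : ℤ, μ k ≠ 0 →
      w * Complex.exp (2 * Real.pi * Complex.I * (k : ℂ) * (t : ℂ)) = 1 := by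
    intro k hk
    have hkpos : 0 < μ k := lt_of_le_of_ne (hν k) (Ne.symm hk)
    set z := w * Complex.exp (2 * Real.pi * Complex.I * (k : ℂ) * (t : ℂ)) with hz
    have hwg : w * g k = (μ k : ℂ) * z := by rw [hg, hz]; ring
    have hre : (μ k : ℝ) * z.re = μ k := by
      have h0 := hzero k
      rw [hwg, Complex.re_ofReal_mul] at h0
      linarith
    have hzre : z.re = 1 := by
      have := mul_left_cancel₀ (ne_of_gt hkpos) (hre.trans (mul_one (μ k)).symm)
      exact this
    have hznorm : ‖z‖ = 1 := by
      rw [hz, norm_mul, hw, Complex.norm_conj, hnorm,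
        one_mul]
      have := term_norm (fun _ => 1) (fun _ => zero_le_one) t k
      simpa using this
    have him : z.im = 0 := by
      have : z.re ^ 2 + z.im ^ 2 = 1 := by
        have := Complex.sq_norm z
        rw [hznorm] at this
        rw [Complex.normSq_apply] at this
        nlinarith
      nlinarith
    exact Complex.ext (by simp [hzre]) (by simp [him])
  -- support points all in same coset
  obtain ⟨k₀, hk₀, -⟩ := hap 0 0 (by decide)
  have hG : ∀ k : ℤ, μ k ≠ 0 → ∃ n : ℤ, ((k - k₀ : ℤ) : ℝ) * t = (n : ℝ) := by
    intro k hk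
    have he : Complex.exp (2 * Real.pi * Complex.I * (k : ℂ) * (t : ℂ))
        = Complex.exp (2 * Real.pi * Complex.I * (k₀ : ℂ) * (t : ℂ)) := by
      have h1' := hkey k hk
      have h2' := hkey k₀ hk₀
      have hw0 : w ≠ 0 := by
        intro hweq
        rw [hweq, zero_mul] at h1'
        exact one_ne_zero h1'.symm
      exact mul_left_cancel₀ hw0 (h1'.trans h2'.symm)
    rw [Complex.exp_eq_exp_iff_exists_int] at he
    obtain ⟨n, hn⟩ := he
    refine ⟨n, ?_⟩
    have hπ : (2 * (Real.pi : ℂ) * Complex.I) ≠ 0 :=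
      mul_ne_zero (mul_ne_zero two_ne_zero (Complex.ofReal_ne_zero.mpr Real.pi_ne_zero))
        Complex.I_ne_zero
    have hc : (2 * (Real.pi : ℂ) * Complex.I) * (((k : ℂ) - (k₀ : ℂ)) * (t : ℂ) - (n : ℂ)) = 0 := by
      linear_combination hn
    have hc2 : ((k : ℂ) - (k₀ : ℂ)) * (t : ℂ) - (n : ℂ) = 0 := by
      rcases mul_eq_zero.mp hc with h' | h'
      · exact absurd h' hπ
      · exact h'
    have h3 : ((((k - k₀ : ℤ) : ℝ) * t : ℝ) : ℂ) = (((n : ℤ) : ℝ) : ℂ) := by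
      push_cast
      linear_combination hc2
    exact_mod_cast h3
  -- subgroup argument
  let G : AddSubgroup ℤ :=
  { carrier := {m : ℤ | ∃ n : ℤ, (m : ℝ) * t = (n : ℝ)}
    zero_mem' := ⟨0, by simp⟩
    add_mem' := by
      rintro x y ⟨n1, h1'⟩ ⟨n2, h2'⟩
      exact ⟨n1 + n2, by push_cast; rw [add_mul, h1', h2']⟩
    neg_mem' := by
      rintro x ⟨n, hn⟩
      exact ⟨-n, by push_cast; rw [neg_mul, hn]⟩ }
  obtain ⟨β, hβ⟩ := Int.subgroup_cyclic G
  have hmemiff : ∀ m : ℤ, m ∈ G ↔ β ∣ m := by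
    intro m
    rw [hβ, ← AddSubgroup.zmultiples_eq_closure, Int.mem_zmultiples_iff]
  have hβ1 : β.natAbs ≠ 1 := by
    intro hone
    have : (1 : ℤ) ∈ G ∨ (-1 : ℤ) ∈ G := by
      rcases Int.natAbs_eq_iff.mp hone with h' | h'
      · left; rw [hβ, h']; exact AddSubgroup.subset_closure rfl
      · right; rw [hβ, h']; exact AddSubgroup.subset_closure rfl
    have h1G : (1 : ℤ) ∈ G := by
      rcases this with h' | h'
      · exact h'
      · simpa using G.neg_mem h'
    obtain ⟨n, hn⟩ := h1G
    simp only [Int.cast_one, one_mul] at hn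
    have hn0 : n ≠ 0 := by
      intro h0
      rw [h0] at hn
      simp at hn
      exact ht0 hn
    have : (1 : ℝ) ≤ |(n : ℝ)| := by
      have h4 := Int.one_le_abs hn0
      have : ((1 : ℤ) : ℝ) ≤ ((|n| : ℤ) : ℝ) := Int.cast_le.mpr h4
      rwa [Int.cast_abs, Int.cast_one] at this
    rw [← hn] at this
    linarith [abs_le.mp ht]
  obtain ⟨k, hk, hnd⟩ := hap β k₀ hβ1
  exact hnd ((hmemiff (k - k₀)).mp (hG k hk))







set_option maxHeartbeats 1000000 in
lemma quad_bound (μ : ℤ → ℝ) (hν : ∀ k, 0 ≤ μ k) (h1 : HasSum μ 1) (hap : StrictlyAperiodic μ) :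
    ∃ b d : ℝ, 0 < b ∧ 0 < d ∧ d ≤ 1/2 ∧ ∀ t : ℝ, |t| ≤ d → ‖ft μ t‖ ≤ 1 - b * t ^ 2 := by
  obtain ⟨j, hj, -⟩ := hap 0 0 (by decide)
  obtain ⟨l, hl, hlj'⟩ := hap 0 j (by decide)
  have hm0 : l - j ≠ 0 := fun h => hlj' (zero_dvd_iff.mpr h)
  have hlj : l ≠ j := sub_ne_zero.mp hm0
  set m : ℤ := l - j with hm
  set a : ℝ := μ j with hadef
  set bb : ℝ := μ l with hbdef
  have ha : 0 < a := lt_of_le_of_ne (hν j) (Ne.symm hj)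
  have hb : 0 < bb := lt_of_le_of_ne (hν l) (Ne.symm hl)
  have hmabs : (1 : ℝ) ≤ |(m : ℝ)| := by
    have h4 := Int.one_le_abs hm0
    have : ((1 : ℤ) : ℝ) ≤ ((|m| : ℤ) : ℝ) := Int.cast_le.mpr h4
    rwa [Int.cast_abs, Int.cast_one] at this
  have hmpos : 0 < |(m : ℝ)| := lt_of_lt_of_le one_pos hmabs
  set s : ℝ := a + bb with hs_def
  have hs : 0 < s := by positivity
  refine ⟨8 * a * bb * (m : ℝ) ^ 2 / s, 1 / (2 * |(m : ℝ)|), by positivity, by positivity, ?_, ?_⟩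
  · rw [div_le_div_iff₀ (by positivity) (by norm_num)]
    linarith
  intro t ht
  set θ : ℝ := 2 * Real.pi * (m : ℝ) * t with hθdef
  have hπ := Real.pi_pos
  have hθabs : |θ| ≤ Real.pi := by
    have h5 : |θ| = 2 * Real.pi * |(m : ℝ)| * |t| := by
      rw [hθdef, abs_mul, abs_mul, abs_of_pos (by positivity : (0:ℝ) < 2 * Real.pi)]
    rw [h5]
    have h6 : 2 * Real.pi * |(m : ℝ)| * |t| ≤ 2 * Real.pi * |(m : ℝ)| * (1 / (2 * |(m : ℝ)|)) := by
      apply mul_le_mul_of_nonneg_left ht (by positivity)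
    calc 2 * Real.pi * |(m : ℝ)| * |t| ≤ 2 * Real.pi * |(m : ℝ)| * (1 / (2 * |(m : ℝ)|)) := h6
      _ = Real.pi := by field_simp
  have hcos := Real.cos_le_one_sub_mul_cos_sq hθabs
  have hquad : 8 * (m : ℝ) ^ 2 * t ^ 2 ≤ 1 - Real.cos θ := by
    have h7 : 2 / Real.pi ^ 2 * θ ^ 2 = 8 * (m : ℝ) ^ 2 * t ^ 2 := by
      rw [hθdef]; field_simp; ring
    linarith
  -- split the sum
  set g : ℤ → ℂ := fun k => (μ k : ℂ) * Complex.exp (2 * Real.pi * Complex.I * (k : ℂ) * (t : ℂ)) with hg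
  have hsumg : Summable g := summable_term μ h1.summable hν t
  set g1 : ℤ → ℂ := fun k => if k = j then 0 else g k with hg1
  set g2 : ℤ → ℂ := fun k => if k = l then 0 else g1 k with hg2
  set μ1 : ℤ → ℝ := fun k => if k = j then 0 else μ k with hμ1
  set μ2 : ℤ → ℝ := fun k => if k = l then 0 else μ1 k with hμ2
  have hnorm1 : ∀ k, ‖g1 k‖ = μ1 k := by
    intro k
    by_cases hk : k = j
    · simp [hg1, hμ1, hk]
    · simp only [hg1, hμ1, if_neg hk]
      exact term_norm μ hν t k
  have hnorm2 : ∀ k, ‖g2 k‖ = μ2 k := by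
    intro k
    by_cases hk : k = l
    · simp [hg2, hμ2, hk]
    · simp only [hg2, hμ2, if_neg hk]
      exact hnorm1 k
  have hμ1nonneg : ∀ k, 0 ≤ μ1 k := by
    intro k
    by_cases hk : k = j
    · simp [hμ1, hk]
    · simp only [hμ1, if_neg hk]; exact hν k
  have hμ1le : ∀ k, μ1 k ≤ μ k := by
    intro k
    by_cases hk : k = j
    · simp only [hμ1, if_pos hk, hk]; exact hν j
    · simp [hμ1, if_neg hk]
  have hμ1sum : Summable μ1 := Summable.of_nonneg_of_le hμ1nonneg hμ1le h1.summable
  have hμ2nonneg : ∀ k, 0 ≤ μ2 k := by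
    intro k
    by_cases hk : k = l
    · simp [hμ2, hk]
    · simp only [hμ2, if_neg hk]; exact hμ1nonneg k
  have hμ2le : ∀ k, μ2 k ≤ μ1 k := by
    intro k
    by_cases hk : k = l
    · simp only [hμ2, if_pos hk]; exact hμ1nonneg k
    · simp [hμ2, if_neg hk]
  have hμ2sum : Summable μ2 := Summable.of_nonneg_of_le hμ2nonneg hμ2le hμ1sum
  have hg1sum : Summable g1 := by
    apply Summable.of_norm
    have : (fun k => ‖g1 k‖) = μ1 := funext hnorm1
    rw [this]; exact hμ1sum
  have hg2sum : Summable g2 := by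
    apply Summable.of_norm
    have : (fun k => ‖g2 k‖) = μ2 := funext hnorm2
    rw [this]; exact hμ2sum
  -- tsum identities
  have hsplitg : ft μ t = g j + (g l + ∑' k, g2 k) := by
    rw [ft]
    have e1 : ∑' k, g k = g j + ∑' k, g1 k := by
      have := Summable.tsum_eq_add_tsum_ite hsumg j
      rw [this]
    have e2 : ∑' k, g1 k = g1 l + ∑' k, g2 k := by
      have := Summable.tsum_eq_add_tsum_ite hg1sum l
      rw [this]
    have e3 : g1 l = g l := by simp [hg1, if_neg hlj]
    rw [show (∑' k : ℤ, (μ k : ℂ) * Complex.exp (2 * Real.pi * Complex.I * (k : ℂ) * (t : ℂ))) = ∑' k, g k from rfl, e1, e2, e3]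
  have hsplitμ : ∑' k, μ2 k = 1 - a - bb := by
    have e1 : (1 : ℝ) = μ j + ∑' k, μ1 k := by
      rw [← h1.tsum_eq]
      exact Summable.tsum_eq_add_tsum_ite h1.summable j
    have e2 : ∑' k, μ1 k = μ1 l + ∑' k, μ2 k := Summable.tsum_eq_add_tsum_ite hμ1sum l
    have e3 : μ1 l = μ l := by simp [hμ1, if_neg hlj]
    rw [e2, e3] at e1
    rw [hadef, hbdef]
    linarith
  have hrest : ‖∑' k, g2 k‖ ≤ 1 - a - bb := by
    calc ‖∑' k, g2 k‖ ≤ ∑' k, ‖g2 k‖ := norm_tsum_le_tsum_norm (by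
          have : (fun k => ‖g2 k‖) = μ2 := funext hnorm2
          rw [this]; exact hμ2sum)
      _ = ∑' k, μ2 k := by rw [funext hnorm2]
      _ = 1 - a - bb := hsplitμ
  -- the pair bound
  have hpaireq : g j + g l
      = Complex.exp (((2 * Real.pi * j * t : ℝ) : ℂ) * Complex.I)
        * ((a : ℂ) + (bb : ℂ) * Complex.exp (((θ : ℝ) : ℂ) * Complex.I)) := by
    rw [hg]
    simp only
    rw [term_eq μ t j, term_eq μ t l]
    rw [show (((2 * Real.pi * l * t : ℝ) : ℂ)) * Complex.I
        = ((2 * Real.pi * j * t : ℝ) : ℂ) * Complex.I + ((θ : ℝ) : ℂ) * Complex.I by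
      rw [hθdef, hm]; push_cast; ring]
    rw [Complex.exp_add]
    rw [hadef, hbdef]
    ring
  have hpairnorm : ‖g j + g l‖ = ‖(a : ℂ) + (bb : ℂ) * Complex.exp (((θ : ℝ) : ℂ) * Complex.I)‖ := by
    rw [hpaireq, norm_mul, Complex.norm_exp_ofReal_mul_I, one_mul]
  set q : ℝ := a * bb * (1 - Real.cos θ) / s with hq_def
  have hqs : q * s = a * bb * (1 - Real.cos θ) := div_mul_cancel₀ _ (ne_of_gt hs)
  have hcos1 : Real.cos θ ≤ 1 := Real.cos_le_one θ
  have hcosm1 : -1 ≤ Real.cos θ := Real.neg_one_le_cos θ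
  have hsincos := Real.sin_sq_add_cos_sq θ
  have hy : 0 ≤ s - q := by
    have hqss : q * s ≤ s * s := by
      rw [hqs, hs_def]
      nlinarith [sq_nonneg (a - bb), mul_pos ha hb]
    nlinarith [hs, hqss]
  have habsval : ‖(a : ℂ) + (bb : ℂ) * Complex.exp (((θ : ℝ) : ℂ) * Complex.I)‖
      = Real.sqrt ((a + bb * Real.cos θ) ^ 2 + (bb * Real.sin θ) ^ 2) := by
    rw [Complex.norm_def, Complex.normSq_apply]
    have hre : ((a : ℂ) + (bb : ℂ) * Complex.exp (((θ : ℝ) : ℂ) * Complex.I)).re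
        = a + bb * Real.cos θ := by
      simp [Complex.add_re, Complex.mul_re, Complex.exp_ofReal_mul_I_re, Complex.exp_ofReal_mul_I_im]
    have him : ((a : ℂ) + (bb : ℂ) * Complex.exp (((θ : ℝ) : ℂ) * Complex.I)).im
        = bb * Real.sin θ := by
      simp [Complex.add_im, Complex.mul_im, Complex.exp_ofReal_mul_I_re, Complex.exp_ofReal_mul_I_im]
    rw [hre, him]
    ring_nf
  have hpairle : ‖g j + g l‖ ≤ s - q := by
    rw [hpairnorm, habsval]
    have h2 : (a + bb * Real.cos θ) ^ 2 + (bb * Real.sin θ) ^ 2 ≤ (s - q) ^ 2 := by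
      have expand : (s - q) ^ 2 = s * s - 2 * (q * s) + q ^ 2 := by ring
      rw [expand, hqs, hs_def]
      have hbb2 : bb ^ 2 * (Real.sin θ ^ 2 + Real.cos θ ^ 2) = bb ^ 2 * 1 := by rw [hsincos]
      nlinarith [sq_nonneg q, hbb2]
    calc Real.sqrt ((a + bb * Real.cos θ) ^ 2 + (bb * Real.sin θ) ^ 2)
        ≤ Real.sqrt ((s - q) ^ 2) := Real.sqrt_le_sqrt h2
      _ = s - q := Real.sqrt_sq hy
  -- combine
  have htotal : ‖ft μ t‖ ≤ 1 - q := by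
    rw [hsplitg, ← add_assoc]
    calc ‖g j + g l + ∑' k, g2 k‖ ≤ ‖g j + g l‖ + ‖∑' k, g2 k‖ := norm_add_le _ _
      _ ≤ (s - q) + (1 - a - bb) := add_le_add hpairle hrest
      _ = 1 - q := by rw [hs_def]; ring
  have hq2 : 8 * a * bb * (m : ℝ) ^ 2 / s * t ^ 2 ≤ q := by
    have h9 : 8 * a * bb * (m : ℝ) ^ 2 * t ^ 2 ≤ a * bb * (1 - Real.cos θ) := by
      have := mul_le_mul_of_nonneg_left hquad (mul_pos ha hb).le
      nlinarith [this]
    calc 8 * a * bb * (m : ℝ) ^ 2 / s * t ^ 2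
        = (8 * a * bb * (m : ℝ) ^ 2 * t ^ 2) / s := by ring
      _ ≤ (a * bb * (1 - Real.cos θ)) / s := (div_le_div_iff_of_pos_right hs).mpr h9
      _ = q := rfl
  linarith


/-- Lemma 2.1.6: a strictly aperiodic probability measure `μ` on `ℤ`
admits constants `0 ≤ c < 1` and `d > 0` with `|μ̂(t)| ≤ 1 - ((1 - c²)/(8d²)) t²` for
`|t| ≤ d`; consequently there is `C > 0` with `|μ̂(t)| ≤ e^{-Ct²}` on `[-1/2, 1/2)`. -/
theorem strictlyAperiodic_gaussian_bound
    (μ : ℤ → ℝ) (hμ : IsProbMeasure μ) (hap : StrictlyAperiodic μ) :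
    (∃ c d : ℝ, 0 ≤ c ∧ c < 1 ∧ 0 < d ∧
      ∀ t : ℝ, |t| ≤ d → ‖ft μ t‖ ≤ 1 - (1 - c ^ 2) / (8 * d ^ 2) * t ^ 2) ∧
    (∃ C : ℝ, 0 < C ∧
      ∀ t ∈ Set.Ico (-(1 : ℝ) / 2) (1 / 2), ‖ft μ t‖ ≤ Real.exp (-C * t ^ 2)) := by
  obtain ⟨hpos, h1⟩ := hμ
  obtain ⟨b, d, hb, hd, hd2, hquad⟩ := quad_bound μ hpos h1 hap
  constructor
  · -- first conjunct
    have harg : 0 ≤ 1 - min (8 * b * d ^ 2) 1 := by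
      have := min_le_right (8 * b * d ^ 2) 1
      linarith
    have hmin : 0 < min (8 * b * d ^ 2) 1 := lt_min (by positivity) one_pos
    refine ⟨Real.sqrt (1 - min (8 * b * d ^ 2) 1), d, Real.sqrt_nonneg _, ?_, hd, ?_⟩
    · have h9 : Real.sqrt (1 - min (8 * b * d ^ 2) 1) < Real.sqrt 1 :=
        Real.sqrt_lt_sqrt harg (by linarith)
      simpa using h9
    · intro t ht
      rw [Real.sq_sqrt harg]
      have hsimp : 1 - (1 - min (8 * b * d ^ 2) 1) = min (8 * b * d ^ 2) 1 := by ring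
      rw [hsimp]
      have hcoef : min (8 * b * d ^ 2) 1 / (8 * d ^ 2) ≤ b := by
        rw [div_le_iff₀ (by positivity)]
        have := min_le_left (8 * b * d ^ 2) 1
        linarith
      have h5 := hquad t ht
      have h6 : min (8 * b * d ^ 2) 1 / (8 * d ^ 2) * t ^ 2 ≤ b * t ^ 2 :=
        mul_le_mul_of_nonneg_right hcoef (sq_nonneg t)
      linarith
  · -- second conjunct
    have hcont : Continuous (ft μ) := cont_ft μ hpos h1.summable
    set K : Set ℝ := Set.Icc (-(1 : ℝ) / 2) (1 / 2) ∩ {x : ℝ | d ≤ |x|} with hK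
    have hKc : IsCompact K :=
      isCompact_Icc.inter_right (isClosed_le continuous_const continuous_abs)
    have hKne : K.Nonempty := by
      refine ⟨1 / 2, ⟨?_, ?_⟩⟩
      · constructor <;> norm_num
      · show d ≤ |(1 : ℝ) / 2|
        rw [abs_of_pos (by norm_num : (0:ℝ) < 1/2)]
        exact hd2
    obtain ⟨x₀, hx₀K, hx₀max⟩ := hKc.exists_isMaxOn hKne hcont.norm.continuousOn
    set M : ℝ := ‖ft μ x₀‖ with hM
    have hM1 : M < 1 := by
      apply norm_ft_lt_one μ hpos h1 hap
      · intro h0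
        have h7 := hx₀K.2
        rw [Set.mem_setOf_eq, h0] at h7
        simp at h7
        linarith
      · obtain ⟨⟨hl', hr'⟩, -⟩ := hx₀K
        rw [abs_le]
        constructor <;> linarith
    set M' : ℝ := max M (1 / 2) with hM'
    have hM'1 : M' < 1 := max_lt hM1 (by norm_num)
    have hM'pos : 0 < M' := lt_of_lt_of_le (by norm_num : (0:ℝ) < 1/2) (le_max_right _ _)
    have hlog : 0 < -Real.log M' := by
      have := Real.log_neg hM'pos hM'1
      linarith
    set C : ℝ := min b (-4 * Real.log M') with hC
    have hCpos : 0 < C := lt_min hb (by linarith)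
    refine ⟨C, hCpos, ?_⟩
    intro t ht
    obtain ⟨htl, htr⟩ := ht
    rcases le_or_gt (|t|) d with hcase | hcase
    · have h5 := hquad t hcase
      have hCb : C ≤ b := min_le_left _ _
      have hexp : 1 - C * t ^ 2 ≤ Real.exp (-C * t ^ 2) := by
        have := Real.add_one_le_exp (-C * t ^ 2)
        linarith
      have h6 : C * t ^ 2 ≤ b * t ^ 2 := mul_le_mul_of_nonneg_right hCb (sq_nonneg t)
      linarith
    · have htK : t ∈ K := ⟨⟨htl, le_of_lt htr⟩, le_of_lt hcase⟩
      have h6 : ‖ft μ t‖ ≤ M := hx₀max htK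
      have ht2 : t ^ 2 ≤ 1 / 4 := by
        have h7 : |t| ≤ 1 / 2 := by
          rw [abs_le]; constructor <;> linarith
        nlinarith [abs_nonneg t, sq_abs t]
      have hC4 : C ≤ -4 * Real.log M' := min_le_right _ _
      have h8 : Real.log M' ≤ -C * t ^ 2 := by
        have h9 : 0 ≤ C * (1 / 4 - t ^ 2) :=
          mul_nonneg hCpos.le (by linarith)
        nlinarith
      calc ‖ft μ t‖ ≤ M := h6
        _ ≤ M' := le_max_left _ _
        _ = Real.exp (Real.log M') := (Real.exp_log hM'pos).symm
        _ ≤ Real.exp (-C * t ^ 2) := Real.exp_le_exp.mpr h8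
end

section
/- Let (μ_n) be a sequence of probability measures on ℤ such that (1) there exist 0 < α ≤ 1 and C > 0 with |μ_n(x + y) − μ_n(x)| ≤ C |y|^α / |x|^{1+α} for all n ≥ 1 and all x, y ∈ ℤ with 2|y| ≤ |x|, and (2) μ̂_n(t) → 0 as n → ∞ for almost every t ∈ [−1/2, 1/2). Then ‖μ_n − μ_n∗δ_1‖₁ = ∑_{k∈ℤ} |μ_n(k) − μ_n(k−1)| → 0 as n → ∞. -/
open scoped BigOperators
open Filter MeasureTheory

section Aux
open Complex

lemma norm_term' (c : ℝ) (hc : 0 ≤ c) (m : ℤ) (t : ℝ) :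
    ‖(c : ℂ) * Complex.exp (2 * Real.pi * Complex.I * (m:ℂ) * (t:ℂ))‖ = c := by
  rw [norm_mul]
  have : (2 * Real.pi * Complex.I * (m:ℂ) * (t:ℂ)) = ((2 * Real.pi * m * t : ℝ) : ℂ) * Complex.I := by
    push_cast; ring
  rw [this, Complex.norm_exp_ofReal_mul_I,
    Complex.norm_real, Real.norm_eq_abs, _root_.abs_of_nonneg hc, mul_one]

lemma norm_term (ν : ℤ → ℝ) (hν : ∀ k, 0 ≤ ν k) (j : ℤ) (t : ℝ) :
    ‖(ν j : ℂ) * Complex.exp (2 * Real.pi * Complex.I * (j:ℂ) * (t:ℂ))‖ = ν j :=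
  norm_term' (ν j) (hν j) j t

lemma ft_continuous (ν : ℤ → ℝ) (hν : IsProbMeasure ν) : Continuous (ft ν) := by
  apply continuous_tsum (u := ν)
  · intro i
    exact continuous_const.mul (Complex.continuous_exp.comp (by continuity))
  · exact hν.2.summable
  · intro j t
    exact le_of_eq (norm_term ν hν.1 j t)

lemma ft_norm_le (ν : ℤ → ℝ) (hν : IsProbMeasure ν) (t : ℝ) : ‖ft ν t‖ ≤ 1 := by
  have hs : Summable fun j : ℤ =>
      ‖(ν j : ℂ) * Complex.exp (2 * Real.pi * Complex.I * (j:ℂ) * (t:ℂ))‖ := by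
    apply Summable.congr hν.2.summable
    intro j; exact (norm_term ν hν.1 j t).symm
  calc ‖ft ν t‖ ≤ ∑' j : ℤ, ‖(ν j : ℂ) * Complex.exp (2 * Real.pi * Complex.I * (j:ℂ) * (t:ℂ))‖ :=
        norm_tsum_le_tsum_norm hs
    _ = ∑' j : ℤ, ν j := tsum_congr (fun j => norm_term ν hν.1 j t)
    _ = 1 := hν.2.tsum_eq

lemma int_e (m : ℤ) :
    ∫ t in Set.Ico (-(1:ℝ)/2) (1/2),
      Complex.exp (2 * Real.pi * Complex.I * (m:ℂ) * (t:ℂ)) = if m = 0 then 1 else 0 := by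
  rw [integral_Ico_eq_integral_Ioo, ← integral_Ioc_eq_integral_Ioo,
    ← intervalIntegral.integral_of_le (by norm_num)]
  by_cases hm : m = 0
  · simp [hm]
    norm_num
  · have hc : (2 * Real.pi * Complex.I * (m:ℂ)) ≠ 0 := by
      simp [Real.pi_ne_zero, Complex.I_ne_zero, hm]
    rw [if_neg hm]
    have := integral_exp_mul_complex (a := -(1:ℝ)/2) (b := (1:ℝ)/2) hc
    simp only [mul_assoc] at this ⊢
    rw [this, div_eq_zero_iff]
    left
    rw [sub_eq_zero]
    exact Complex.exp_eq_exp_iff_exists_int.mpr ⟨m, by push_cast; ring⟩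

lemma inversion (ν : ℤ → ℝ) (hν : IsProbMeasure ν) (k : ℤ) :
    ((ν k : ℂ)) = ∫ t in Set.Ico (-(1:ℝ)/2) (1/2),
      ft ν t * Complex.exp (2 * Real.pi * Complex.I * ((-k : ℤ):ℂ) * (t:ℂ)) := by
  have key : ∀ t : ℝ, ft ν t * Complex.exp (2 * Real.pi * Complex.I * ((-k : ℤ):ℂ) * (t:ℂ))
      = ∑' j : ℤ, (ν j : ℂ) * Complex.exp (2 * Real.pi * Complex.I * ((j - k : ℤ):ℂ) * (t:ℂ)) := by
    intro t
    rw [ft, ← tsum_mul_right]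
    apply tsum_congr
    intro j
    rw [mul_assoc, ← Complex.exp_add]
    congr 1
    push_cast
    ring
  have hInt : ∀ j : ℤ, IntegrableOn
      (fun t : ℝ => (ν j : ℂ) * Complex.exp (2 * Real.pi * Complex.I * ((j - k : ℤ):ℂ) * (t:ℂ)))
      (Set.Ico (-(1:ℝ)/2) (1/2)) volume := by
    intro j
    have hcont : Continuous (fun t : ℝ =>
        (ν j : ℂ) * Complex.exp (2 * Real.pi * Complex.I * ((j - k : ℤ):ℂ) * (t:ℂ))) :=
      continuous_const.mul (Complex.continuous_exp.comp (by continuity))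
    exact (hcont.integrableOn_Icc).mono_set Set.Ico_subset_Icc_self
  have hvol : (volume (Set.Ico (-(1:ℝ)/2) (1/2))).toReal = 1 := by
    rw [Real.volume_Ico]
    norm_num
  have hNorm : ∀ j : ℤ, ∫ t in Set.Ico (-(1:ℝ)/2) (1/2),
      ‖(ν j : ℂ) * Complex.exp (2 * Real.pi * Complex.I * ((j - k : ℤ):ℂ) * (t:ℂ))‖ = ν j := by
    intro j
    rw [setIntegral_congr_fun measurableSet_Ico (fun t _ => norm_term' (ν j) (hν.1 j) (j - k) t),
      setIntegral_const, measureReal_def, hvol, one_smul]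
  have hSum : Summable fun j : ℤ => ∫ t in Set.Ico (-(1:ℝ)/2) (1/2),
      ‖(ν j : ℂ) * Complex.exp (2 * Real.pi * Complex.I * ((j - k : ℤ):ℂ) * (t:ℂ))‖ := by
    exact Summable.congr hν.2.summable (fun j => (hNorm j).symm)
  calc ((ν k : ℂ))
      = ∑' j : ℤ, (ν j : ℂ) * (if (j - k : ℤ) = 0 then (1:ℂ) else 0) := by
        rw [tsum_eq_single k]
        · simp
        · intro j hj
          rw [if_neg (by omega), mul_zero]
    _ = ∑' j : ℤ, ∫ t in Set.Ico (-(1:ℝ)/2) (1/2),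
          (ν j : ℂ) * Complex.exp (2 * Real.pi * Complex.I * ((j - k : ℤ):ℂ) * (t:ℂ)) := by
        apply tsum_congr
        intro j
        rw [MeasureTheory.integral_const_mul, int_e]
    _ = ∫ t in Set.Ico (-(1:ℝ)/2) (1/2),
          ∑' j : ℤ, (ν j : ℂ) * Complex.exp (2 * Real.pi * Complex.I * ((j - k : ℤ):ℂ) * (t:ℂ)) :=
        MeasureTheory.integral_tsum_of_summable_integral_norm hInt hSum
    _ = _ := by
        apply setIntegral_congr_fun measurableSet_Ico
        intro t _
        exact (key t).symm

lemma mu_tendsto_zero (μ : ℕ → ℤ → ℝ) (hprob : ∀ n, IsProbMeasure (μ n))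
    (hdecay : ∀ᵐ t ∂(MeasureTheory.volume.restrict (Set.Ico (-(1 : ℝ) / 2) (1 / 2))),
      Filter.Tendsto (fun n => ft (μ n) t) Filter.atTop (nhds 0)) (k : ℤ) :
    Tendsto (fun n => μ n k) atTop (nhds 0) := by
  set I : Set ℝ := Set.Ico (-(1:ℝ)/2) (1/2) with hI
  have hCint : Tendsto (fun n => ∫ t in I,
      ft (μ n) t * Complex.exp (2 * Real.pi * Complex.I * ((-k : ℤ):ℂ) * (t:ℂ)))
      atTop (nhds (∫ (_ : ℝ) in I, (0:ℂ))) := by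
    apply MeasureTheory.tendsto_integral_of_dominated_convergence (fun _ => (1:ℝ))
    · intro n
      apply Continuous.aestronglyMeasurable
      exact (ft_continuous _ (hprob n)).mul
        (Complex.continuous_exp.comp (by continuity))
    · refine (integrableOn_const_iff (C := (1:ℝ))).mpr (Or.inr ?_)
      rw [hI, Real.volume_Ico]
      exact ENNReal.ofReal_lt_top
    · intro n
      filter_upwards with t
      have he : ‖Complex.exp (2 * Real.pi * Complex.I * ((-k : ℤ):ℂ) * (t:ℂ))‖ = 1 := by
        simpa using norm_term' 1 zero_le_one (-k) t
      rw [norm_mul, he, mul_one]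
      exact ft_norm_le _ (hprob n) t
    · filter_upwards [hdecay] with t ht
      simpa using ht.mul_const (Complex.exp (2 * Real.pi * Complex.I * ((-k : ℤ):ℂ) * (t:ℂ)))
  rw [MeasureTheory.integral_zero] at hCint
  have hC2 : Tendsto (fun n => ((μ n k : ℂ))) atTop (nhds 0) := by
    apply hCint.congr
    intro n
    exact (inversion (μ n) (hprob n) k).symm
  have := (Complex.continuous_re.tendsto 0).comp hC2
  simpa [Function.comp_def] using this

end Aux

/-- Lemma 2.2.1: if the probability measures `μ_n` satisfy the regularity
estimate `|μ_n(x+y) - μ_n(x)| ≤ C |y|^α / |x|^{1+α}` (for `2|y| ≤ |x|`) and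
`μ̂_n(t) → 0` for a.e. `t ∈ [-1/2, 1/2)`, then `‖μ_n - μ_n ∗ δ_1‖₁ → 0`. -/
theorem l1_norm_conv_delta_tendsto_zero
    (μ : ℕ → ℤ → ℝ) (hprob : ∀ n, IsProbMeasure (μ n))
    (α C : ℝ) (hα0 : 0 < α) (hα1 : α ≤ 1) (hC : 0 < C)
    (hreg : ∀ (n : ℕ) (x y : ℤ), 2 * |y| ≤ |x| →
      |μ n (x + y) - μ n x| ≤ C * |(y : ℝ)| ^ α / |(x : ℝ)| ^ (1 + α))
    (hdecay : ∀ᵐ t ∂(MeasureTheory.volume.restrict (Set.Ico (-(1 : ℝ) / 2) (1 / 2))),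
      Filter.Tendsto (fun n => ft (μ n) t) Filter.atTop (nhds 0)) :
    Filter.Tendsto (fun n => ∑' k : ℤ, |μ n k - μ n (k - 1)|) Filter.atTop (nhds 0) := by
  have hμ0 := mu_tendsto_zero μ hprob hdecay
  -- summability of the difference
  have hshift : ∀ n, Summable (fun k : ℤ => μ n (k - 1)) := by
    intro n
    exact (hprob n).2.summable.comp_injective (Equiv.subRight (1:ℤ)).injective
  have hd_sum : ∀ n, Summable (fun k : ℤ => |μ n k - μ n (k - 1)|) := by
    intro n
    apply Summable.of_nonneg_of_le (fun k => abs_nonneg _)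
      (fun k => ?_) ((hprob n).2.summable.add (hshift n))
    calc |μ n k - μ n (k - 1)| ≤ |μ n k| + |μ n (k - 1)| := by
          rw [sub_eq_add_neg]
          exact (abs_add_le _ _).trans (by rw [abs_neg])
      _ = μ n k + μ n (k - 1) := by
          rw [_root_.abs_of_nonneg ((hprob n).1 k), _root_.abs_of_nonneg ((hprob n).1 (k-1))]
  -- the dominating tail function
  set g : ℤ → ℝ := fun k => C / |(k:ℝ) - 1| ^ (1 + α) with hgdef
  have hg : Summable g := by
    have h1 : Summable (fun j : ℤ => |(j:ℝ)| ^ (-(1+α))) :=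
      Real.summable_abs_int_rpow (by linarith)
    have h2 : Summable (fun j : ℤ => C / |(j:ℝ)| ^ (1+α)) := by
      apply (h1.mul_left C).congr
      intro j
      rw [Real.rpow_neg (abs_nonneg _), div_eq_mul_inv]
    have h3 := h2.comp_injective (Equiv.subRight (1:ℤ)).injective
    apply h3.congr
    intro j
    simp only [Function.comp_apply, Equiv.subRight_apply, hgdef]
    push_cast
    ring_nf
  have hg_nonneg : ∀ k, 0 ≤ g k := by
    intro k
    apply div_nonneg hC.le
    positivity
  rw [Metric.tendsto_atTop]
  intro ε hε
  obtain ⟨s₀, hs₀⟩ := eventually_atTop.1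
    ((tendsto_order.1 (tendsto_tsum_compl_atTop_zero g)).2 (ε/2) (by positivity))
  set s : Finset ℤ := insert 0 (insert 1 (insert 2 s₀)) with hsdef
  have hg_tail : ∑' k : {x // x ∉ s}, g ↑k < ε/2 := by
    apply hs₀
    intro x hx
    simp [hsdef, Finset.mem_insert.mpr, hx]
  have hfin : Tendsto (fun n => ∑ k ∈ s, |μ n k - μ n (k - 1)|) atTop (nhds 0) := by
    have := tendsto_finset_sum (f := fun (k : ℤ) (n : ℕ) => |μ n k - μ n (k - 1)|)
      (a := fun _ => (0:ℝ)) s (fun k _ => by simpa using ((hμ0 k).sub (hμ0 (k-1))).abs)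
    simpa using this
  obtain ⟨N, hN⟩ := (Metric.tendsto_atTop.1 hfin) (ε/2) (by positivity)
  refine ⟨N, fun n hn => ?_⟩
  have hSnn : 0 ≤ ∑' k : ℤ, |μ n k - μ n (k - 1)| :=
    tsum_nonneg (fun k => abs_nonneg _)
  rw [Real.dist_eq, sub_zero, _root_.abs_of_nonneg hSnn]
  have hsplit := Summable.sum_add_tsum_compl (s := s) (hd_sum n)
  rw [← hsplit]
  have hfinlt : ∑ k ∈ s, |μ n k - μ n (k - 1)| < ε/2 := by
    have := hN n hn
    rw [Real.dist_eq, sub_zero] at this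
    exact (le_abs_self _).trans_lt this
  have htail : ∑' k : {x // x ∉ s}, |μ n ↑k - μ n (↑k - 1)| ≤ ∑' k : {x // x ∉ s}, g ↑k := by
    apply Summable.tsum_le_tsum _ ((hd_sum n).subtype _) (hg.subtype _)
    rintro ⟨k, hk⟩
    have hk0 : k ≠ 0 := fun h => hk (by simp [hsdef, h])
    have hk1 : k ≠ 1 := fun h => hk (by simp [hsdef, h])
    have hk2 : k ≠ 2 := fun h => hk (by simp [hsdef, h])
    have habs : (2:ℤ) * |1| ≤ |k - 1| := by
      rw [abs_one, mul_one]
      rcases le_or_gt k 0 with h | h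
      · exact le_abs.mpr (Or.inr (by omega))
      · exact le_abs.mpr (Or.inl (by omega))
    have h := hreg n (k - 1) 1 habs
    simpa [Real.one_rpow] using h
  calc ∑ k ∈ s, |μ n k - μ n (k - 1)| + ∑' k : {x // x ∉ s}, |μ n ↑k - μ n (↑k - 1)|
      ≤ ∑ k ∈ s, |μ n k - μ n (k - 1)| + ∑' k : {x // x ∉ s}, g ↑k := by
        exact add_le_add_right htail _
    _ < ε/2 + ε/2 := add_lt_add hfinlt hg_tail
    _ = ε := by ring
end

section
/- For every a > 0, every 0 ≤ ρ < 1, and every integer M ≥ 2, there exists 0 ≤ σ < 1 such that the following holds: if ν is a probability measure on ℤ with m₁(ν) ≤ a and with ν(βℤ + r) ≤ ρ for every β ∈ ℤ with |β| ≠ 1 and every r ∈ ℤ, and if l, s are integers with 2 ≤ |s| ≤ M, 1 ≤ |l| ≤ ⌊|s|/2⌋, and l/s ∈ (−1/2, 1/2], then |ν̂(l/s)| ≤ σ. -/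
open scoped BigOperators
open Filter MeasureTheory

open Real in
lemma cos_bound_aux (S : ℤ) (hS : 2 ≤ S) (m : ℤ) (hm : ¬ (S ∣ m)) (δ : ℝ) (hδ : |δ| ≤ 1/2) :
    Real.cos (2 * Real.pi * (((m : ℝ) + δ) / (S : ℝ))) ≤ 1 - 2 / (S : ℝ) ^ 2 := by
  have hSR : (2:ℝ) ≤ (S:ℝ) := by exact_mod_cast hS
  have hS0 : (0:ℝ) < (S:ℝ) := by linarith
  set x : ℝ := ((m:ℝ) + δ) / (S:ℝ) with hx
  set n : ℤ := round x with hn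
  set y : ℝ := x - n with hy
  have hy2 : |y| ≤ 1/2 := abs_sub_round x
  have hmn : m - n * S ≠ 0 := by
    intro h
    exact hm ⟨n, by linear_combination h⟩
  have hmn1 : (1:ℝ) ≤ |(m:ℝ) - (n:ℝ) * (S:ℝ)| := by
    have h1 : (1:ℤ) ≤ |m - n * S| := Int.one_le_abs hmn
    have : ((|m - n * S| : ℤ) : ℝ) = |(m:ℝ) - (n:ℝ) * (S:ℝ)| := by
      push_cast [Int.cast_abs]
      ring_nf
    exact_mod_cast (by rw [this] at *; exact_mod_cast h1 : (1:ℝ) ≤ |(m:ℝ) - (n:ℝ)*(S:ℝ)|)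
  have hyval : y = ((m:ℝ) - (n:ℝ) * (S:ℝ) + δ) / (S:ℝ) := by
    rw [hy, hx]
    field_simp
    ring
  have hylb : 1 / (2 * (S:ℝ)) ≤ |y| := by
    rw [hyval, abs_div, abs_of_pos hS0]
    rw [div_le_div_iff₀ (by linarith) hS0]
    have : 1/2 ≤ |(m:ℝ) - (n:ℝ) * (S:ℝ) + δ| := by
      have := abs_add_le ((m:ℝ) - n*S + δ) (-δ)
      simp only [add_neg_cancel_right] at this
      rw [abs_neg] at this
      linarith
    nlinarith
  have hxy : x = y + (n:ℝ) := by rw [hy]; ring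
  have hcos1 : Real.cos (2*π*x) = Real.cos (2*π*y) := by
    rw [show 2*π*x = 2*π*y + (n:ℝ)*(2*π) by rw [hxy]; ring]
    exact Real.cos_add_int_mul_two_pi _ n
  have hcos2 : Real.cos (2*π*y) = 1 - 2 * Real.sin (π*y)^2 := by
    rw [show 2*π*y = 2*(π*y) by ring, Real.cos_two_mul]
    have := Real.sin_sq_add_cos_sq (π*y)
    linarith
  have hsq : Real.sin (π*|y|)^2 = Real.sin (π*y)^2 := by
    rcases abs_cases y with ⟨h,_⟩|⟨h,_⟩
    · rw [h]
    · rw [h, mul_neg, Real.sin_neg, neg_sq]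
  have hsin : 1/(S:ℝ) ≤ Real.sin (π*|y|) := by
    have h1 : 2/π * (π*|y|) ≤ Real.sin (π*|y|) :=
      Real.mul_le_sin (by positivity) (by nlinarith [Real.pi_pos])
    have h2 : 2/π * (π*|y|) = 2*|y| := by
      field_simp
    have h3 : 1/(S:ℝ) ≤ 2*|y| := by
      have e : 2*(1/(2*(S:ℝ))) = 1/(S:ℝ) := by field_simp
      linarith
    linarith
  have hsin2 : (1/(S:ℝ))^2 ≤ Real.sin (π*|y|)^2 :=
    pow_le_pow_left₀ (by positivity) hsin 2
  rw [hcos1, hcos2]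
  rw [hsq] at hsin2
  have : (1/(S:ℝ))^2 = 1/(S:ℝ)^2 := by ring
  rw [this] at hsin2
  have h4 : 2/(S:ℝ)^2 ≤ 2 * Real.sin (π*y)^2 := by
    rw [show (2:ℝ)/(S:ℝ)^2 = 2 * (1/(S:ℝ)^2) by ring]
    linarith
  linarith

open Real in
lemma key_bound (ν : ℤ → ℝ) (h0 : ∀ k, 0 ≤ ν k) (h1 : HasSum ν 1)
    (L S : ℤ) (hS2 : 2 ≤ S) (hcop : Int.gcd L S = 1) :
    ∃ r₀ : ℤ, ‖ft ν ((L : ℝ) / (S : ℝ))‖ ≤ 1 - 2 / (S : ℝ)^2 * (1 - cosetMass ν S r₀) := by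
  have hsum : Summable ν := h1.summable
  have htsum : ∑' k, ν k = 1 := h1.tsum_eq
  have hSR : (2:ℝ) ≤ (S:ℝ) := by exact_mod_cast hS2
  have hS0 : (0:ℝ) < (S:ℝ) := by linarith
  set t : ℝ := (L : ℝ) / (S : ℝ) with ht
  -- general facts about the indicator sums
  have hind : ∀ r₀ : ℤ, Summable (fun k : ℤ => if S ∣ (k - r₀) then ν k else 0) := by
    intro r₀
    apply Summable.of_norm_bounded hsum
    intro k
    rw [Real.norm_eq_abs]
    split
    · rw [abs_of_nonneg (h0 k)]
    · simp [h0 k]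
  have hcm_nonneg : ∀ r₀ : ℤ, 0 ≤ cosetMass ν S r₀ := by
    intro r₀
    apply tsum_nonneg
    intro k
    split <;> simp [h0 k]
  -- the Fourier sum is summable
  have hterm : ∀ k : ℤ, ‖(ν k : ℂ) * Complex.exp (2 * Real.pi * Complex.I * (k : ℂ) * (t : ℂ))‖ = ν k := by
    intro k
    rw [norm_mul]
    have : (2 * (Real.pi:ℂ) * Complex.I * (k : ℂ) * (t : ℂ)) = ((2 * Real.pi * (k * t) : ℝ) : ℂ) * Complex.I := by
      push_cast; ring
    rw [this, Complex.norm_exp_ofReal_mul_I,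
      Complex.norm_real, Real.norm_eq_abs, abs_of_nonneg (h0 k), mul_one]
  have hsumC : Summable (fun k : ℤ => (ν k : ℂ) * Complex.exp (2 * Real.pi * Complex.I * (k : ℂ) * (t : ℂ))) := by
    apply Summable.of_norm_bounded hsum
    intro k
    rw [hterm k]
  set c : ℂ := ft ν t with hc
  by_cases hc0 : c = 0
  · refine ⟨0, ?_⟩
    rw [hc0]
    simp only [norm_zero]
    have h2 : 2 / (S:ℝ)^2 * (1 - cosetMass ν S 0) ≤ 2/(S:ℝ)^2 * 1 := by
      apply mul_le_mul_of_nonneg_left _ (by positivity)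
      linarith [hcm_nonneg 0]
    have h3 : 2/(S:ℝ)^2 ≤ 1/2 := by
      rw [div_le_iff₀ (by positivity)]
      nlinarith
    linarith
  -- main case
  set θ : ℝ := Complex.arg c with hθ
  set α : ℤ → ℝ := fun k => 2 * Real.pi * (k : ℝ) * t - θ with hα
  have hsumC2 : Summable (fun k : ℤ => (ν k : ℂ) * Complex.exp ((α k : ℝ) * Complex.I)) := by
    apply Summable.of_norm_bounded hsum
    intro k
    rw [norm_mul, Complex.norm_exp_ofReal_mul_I,
      Complex.norm_real, Real.norm_eq_abs, abs_of_nonneg (h0 k), mul_one]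
  have habs : (‖c‖ : ℂ) = ∑' k : ℤ, (ν k : ℂ) * Complex.exp ((α k : ℝ) * Complex.I) := by
    have h := Complex.norm_mul_exp_arg_mul_I c
    rw [← hθ] at h
    have hne : Complex.exp ((θ:ℂ) * Complex.I) ≠ 0 := Complex.exp_ne_zero _
    have h2 : (‖c‖ : ℂ) = c * Complex.exp (-((θ:ℂ) * Complex.I)) := by
      calc (‖c‖ : ℂ) = ((‖c‖ : ℂ) * Complex.exp ((θ:ℂ) * Complex.I)) *
            Complex.exp (-((θ:ℂ) * Complex.I)) := by
              rw [mul_assoc, ← Complex.exp_add, add_neg_cancel, Complex.exp_zero, mul_one]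
        _ = c * Complex.exp (-((θ:ℂ) * Complex.I)) := by rw [h]
    rw [h2, hc, ft, ← tsum_mul_right]
    apply tsum_congr
    intro k
    rw [mul_assoc, ← Complex.exp_add]
    congr 2
    push_cast [hα]
    ring
  have hnormc : ‖c‖ = ∑' k : ℤ, ν k * Real.cos (α k) := by
    have := congrArg Complex.re habs
    rw [Complex.ofReal_re] at this
    rw [this, Complex.re_tsum hsumC2]
    apply tsum_congr
    intro k
    simp [Complex.mul_re, Complex.exp_ofReal_mul_I_re]
  -- choose r₀
  set j₀ : ℤ := round ((S:ℝ) * (θ / (2 * Real.pi))) with hj₀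
  set r₀ : ℤ := j₀ * Int.gcdA L S with hr₀
  set δ : ℝ := (j₀ : ℝ) - (S:ℝ) * (θ / (2 * Real.pi)) with hδdef
  have hδ : |δ| ≤ 1/2 := by
    rw [hδdef, abs_sub_comm]
    exact abs_sub_round _
  have hdvd0 : S ∣ (r₀ * L - j₀) := by
    have hbez := Int.gcd_eq_gcd_ab L S
    rw [hcop] at hbez
    refine ⟨-(j₀ * Int.gcdB L S), ?_⟩
    rw [hr₀]
    push_cast at hbez ⊢
    linear_combination -j₀ * hbez
  have hcopSL : IsCoprime (S : ℤ) L := by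
    rw [Int.isCoprime_iff_gcd_eq_one, Int.gcd_comm]
    exact hcop
  refine ⟨r₀, ?_⟩
  -- termwise estimate
  have hptwise : ∀ k : ℤ, ν k * Real.cos (α k) ≤
      ν k - 2/(S:ℝ)^2 * (ν k - (if S ∣ (k - r₀) then ν k else 0)) := by
    intro k
    by_cases hdk : S ∣ (k - r₀)
    · rw [if_pos hdk]
      have := Real.cos_le_one (α k)
      nlinarith [h0 k]
    · rw [if_neg hdk, sub_zero]
      have hm : ¬ (S ∣ (k * L - j₀)) := by
        intro hdd
        apply hdk
        have h3 : S ∣ (k - r₀) * L := by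
          have : (k - r₀) * L = (k * L - j₀) - (r₀ * L - j₀) := by ring
          rw [this]
          exact dvd_sub hdd hdvd0
        exact hcopSL.dvd_of_dvd_mul_right h3
      have hcos := cos_bound_aux S hS2 (k * L - j₀) hm δ hδ
      have hargeq : α k = 2 * Real.pi * ((((k * L - j₀ : ℤ) : ℝ) + δ) / (S : ℝ)) := by
        rw [hα, hδdef, ht]
        push_cast
        field_simp
        ring
      rw [hargeq]
      calc ν k * Real.cos (2 * Real.pi * ((((k * L - j₀ : ℤ) : ℝ) + δ) / (S : ℝ)))
          ≤ ν k * (1 - 2/(S:ℝ)^2) := mul_le_mul_of_nonneg_left hcos (h0 k)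
        _ = ν k - 2/(S:ℝ)^2 * ν k := by ring
  -- sum the estimate
  have hsumL : Summable (fun k : ℤ => ν k * Real.cos (α k)) := by
    apply Summable.of_norm_bounded hsum
    intro k
    rw [Real.norm_eq_abs, abs_mul, abs_of_nonneg (h0 k)]
    calc ν k * |Real.cos (α k)| ≤ ν k * 1 :=
      mul_le_mul_of_nonneg_left (abs_cos_le_one _) (h0 k)
      _ = ν k := mul_one _
  have hsubS : Summable (fun k : ℤ => ν k - (if S ∣ (k - r₀) then ν k else 0)) :=
    hsum.sub (hind r₀)
  have hsumR : Summable (fun k : ℤ => ν k - 2/(S:ℝ)^2 * (ν k - (if S ∣ (k - r₀) then ν k else 0))) :=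
    hsum.sub ((hsubS).mul_left _)
  have hle : ∑' k : ℤ, ν k * Real.cos (α k) ≤
      ∑' k : ℤ, (ν k - 2/(S:ℝ)^2 * (ν k - (if S ∣ (k - r₀) then ν k else 0))) :=
    Summable.tsum_le_tsum hptwise hsumL hsumR
  have hRHS : ∑' k : ℤ, (ν k - 2/(S:ℝ)^2 * (ν k - (if S ∣ (k - r₀) then ν k else 0)))
      = 1 - 2/(S:ℝ)^2 * (1 - cosetMass ν S r₀) := by
    rw [Summable.tsum_sub hsum ((hsubS).mul_left _), htsum, tsum_mul_left,
      Summable.tsum_sub hsum (hind r₀), htsum]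
    rfl
  rw [hnormc]
  rw [hRHS] at hle
  exact hle


/-- Lemma 3.2: given `a > 0`, `0 ≤ ρ < 1` and an integer `M ≥ 2`, there
is `0 ≤ σ < 1` such that every probability measure `ν` on `ℤ` with `m₁(ν) ≤ a` and mass at
most `ρ` on every proper coset of `ℤ` satisfies `|ν̂(l/s)| ≤ σ` for all integers `l, s` with
`2 ≤ |s| ≤ M`, `1 ≤ |l| ≤ ⌊|s|/2⌋` and `l/s ∈ (-1/2, 1/2]`. -/
theorem fourier_bound_at_rationals
    (a ρ : ℝ) (ha : 0 < a) (hρ0 : 0 ≤ ρ) (hρ1 : ρ < 1) (M : ℤ) (hM : 2 ≤ M) :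
    ∃ σ : ℝ, 0 ≤ σ ∧ σ < 1 ∧
      ∀ ν : ℤ → ℝ, IsProbMeasure ν →
        Summable (fun k : ℤ => |(k : ℝ)| * ν k) → m1 ν ≤ a →
        (∀ β r : ℤ, β.natAbs ≠ 1 → cosetMass ν β r ≤ ρ) →
        ∀ l s : ℤ, 2 ≤ |s| → |s| ≤ M → 1 ≤ |l| → |l| ≤ |s| / 2 →
          -(1 / 2 : ℝ) < (l : ℝ) / (s : ℝ) → (l : ℝ) / (s : ℝ) ≤ 1 / 2 →
          ‖ft ν ((l : ℝ) / (s : ℝ))‖ ≤ σ := by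
  have hM2 : (2:ℝ) ≤ (M:ℝ) := by exact_mod_cast hM
  have hM4 : (4:ℝ) ≤ (M:ℝ)^2 := by nlinarith
  refine ⟨1 - 2*(1-ρ)/(M:ℝ)^2, ?_, ?_, ?_⟩
  · have h1 : 2*(1-ρ)/(M:ℝ)^2 ≤ 2/4 :=
      div_le_div₀ (by norm_num) (by linarith) (by norm_num) hM4
    linarith
  · have h1 : 0 < 2*(1-ρ)/(M:ℝ)^2 := div_pos (by linarith) (by positivity)
    linarith
  · intro ν hprob hm1sum hm1a hcm l s hs2 hsM hl1 hls hlow hup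
    obtain ⟨h0, h1⟩ := hprob
    have hsne : s ≠ 0 := by rintro rfl; norm_num at hs2
    have hlne : l ≠ 0 := by rintro rfl; norm_num at hl1
    set g : ℕ := Int.gcd l s with hg
    have hgpos : 0 < g := Int.gcd_pos_iff.mpr (Or.inl hlne)
    have hgz : ((g:ℤ):ℝ) ≠ 0 := by
      have : (0:ℤ) < (g:ℤ) := by exact_mod_cast hgpos
      exact_mod_cast this.ne'
    set l₁ : ℤ := l / (g:ℤ) with hl₁
    set s₁ : ℤ := s / (g:ℤ) with hs₁
    have hlf : (g:ℤ) * l₁ = l := Int.mul_ediv_cancel' (Int.gcd_dvd_left l s)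
    have hsf : (g:ℤ) * s₁ = s := Int.mul_ediv_cancel' (Int.gcd_dvd_right l s)
    have hcop1 : Int.gcd l₁ s₁ = 1 := Int.gcd_div_gcd_div_gcd (by exact_mod_cast hgpos)
    have hs₁ne : s₁ ≠ 0 := by intro h; apply hsne; rw [← hsf, h, mul_zero]
    have hl₁ne : l₁ ≠ 0 := by intro h; apply hlne; rw [← hlf, h, mul_zero]
    have hfrac : (l:ℝ)/(s:ℝ) = (l₁:ℝ)/(s₁:ℝ) := by
      rw [← hlf, ← hsf]; push_cast
      exact mul_div_mul_left _ _ (Nat.cast_ne_zero.mpr hgpos.ne')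
    have hs₁dvd : s₁ ∣ s := ⟨g, by rw [← hsf]; ring⟩
    have hs₁s : |s₁| ≤ M := by
      refine le_trans ?_ hsM
      exact Int.le_of_dvd (abs_pos.mpr hsne) ((abs_dvd _ _).mpr ((dvd_abs _ _).mpr hs₁dvd))
    obtain ⟨L, S, hS0, hcopLS, hfrac2, hSM, hLne⟩ :
        ∃ L S : ℤ, 0 < S ∧ Int.gcd L S = 1 ∧ (l₁:ℝ)/(s₁:ℝ) = (L:ℝ)/(S:ℝ) ∧ S ≤ M ∧ L ≠ 0 := by
      rcases hs₁ne.lt_or_gt with hneg | hpos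
      · refine ⟨-l₁, -s₁, by omega, ?_, ?_, ?_, by omega⟩
        · rw [show Int.gcd (-l₁) (-s₁) = Int.gcd l₁ s₁ by
            simp [Int.gcd, Int.natAbs_neg]]
          exact hcop1
        · push_cast; rw [neg_div_neg_eq]
        · rw [← abs_of_neg hneg] at *; exact hs₁s
      · refine ⟨l₁, s₁, hpos, hcop1, rfl, ?_, hl₁ne⟩
        rw [← abs_of_pos hpos]; exact hs₁s
    have htabs : |(l:ℝ)/(s:ℝ)| ≤ 1/2 := abs_le.mpr ⟨by linarith, hup⟩
    have hfr : (l:ℝ)/(s:ℝ) = (L:ℝ)/(S:ℝ) := hfrac.trans hfrac2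
    have hS2 : 2 ≤ S := by
      by_contra hcon
      have hS1 : S = 1 := by omega
      rw [hfr, hS1] at htabs
      norm_num at htabs
      have h1L : (1:ℤ) ≤ |L| := Int.one_le_abs hLne
      have : (1:ℝ) ≤ |(L:ℝ)| := by exact_mod_cast h1L
      linarith
    obtain ⟨r₀, hkey⟩ := key_bound ν h0 h1 L S hS2 hcopLS
    rw [hfr]
    refine hkey.trans ?_
    have hnat : S.natAbs ≠ 1 := by omega
    have hcmρ : cosetMass ν S r₀ ≤ ρ := hcm S r₀ hnat
    have hSR : (0:ℝ) < (S:ℝ) := by exact_mod_cast hS0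
    have hSM' : (S:ℝ) ≤ (M:ℝ) := by exact_mod_cast hSM
    have e1 : (2:ℝ)/(M:ℝ)^2 ≤ 2/(S:ℝ)^2 := by
      gcongr
    have e3 : 2/(M:ℝ)^2 * (1-ρ) ≤ 2/(S:ℝ)^2 * (1 - cosetMass ν S r₀) :=
      mul_le_mul e1 (by linarith) (by linarith) (by positivity)
    have e4 : 2*(1-ρ)/(M:ℝ)^2 = 2/(M:ℝ)^2*(1-ρ) := by ring
    linarith
end
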